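/- arXiv:1803.07694 — 9 statements merged into one kernel-verified Lean document; each statement's English description precedes it below -/
import Mathlib

section
/- For integers h ≥ 1 and d ≥ 0, the graph S(h,d) has no h-colouring with defect d; that is, every assignment of h colours to the vertices of S(h,d) yields a vertex with at least d+1 neighbours of its own colour. -/
open SimpleGraph

variable {V α : Type*}

/-- The monochromatic subgraph of `G` under the colouring `f`:
edges of `G` whose endpoints get the same colour. -/
def monoSubgraph (G : SimpleGraph V) (f : V → α) : SimpleGraph V where
  Adj u v := G.Adj u v ∧ f u = f v
  symm := ⟨fun _ _ h => ⟨h.1.symm, h.2.symm⟩⟩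
  loopless := ⟨fun v h => G.loopless.irrefl v h.1⟩

/-- The colouring `f` has defect `d`: every vertex has at most `d`
neighbours of its own colour. -/
def HasDefect (G : SimpleGraph V) (f : V → α) (d : ℕ) : Prop :=
  ∀ v, {u | G.Adj v u ∧ f u = f v}.ncard ≤ d

/-- The colouring `f` has clustering `c`: every monochromatic connected
component has at most `c` vertices. -/
def HasClustering (G : SimpleGraph V) (f : V → α) (c : ℕ) : Prop :=
  ∀ v, {u | (monoSubgraph G f).Reachable v u}.ncard ≤ c

/-- Vertices of the standard example `S(h,d)`: the closure of the complete
`(d+1)`-ary tree of depth `h+1`, i.e. lists over `Fin (d+1)` of length at most `h`. -/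
def SVert (h d : ℕ) : Type := {l : List (Fin (d + 1)) // l.length ≤ h}

/-- The standard example `S(h,d)`: `S(0,d)` is a single vertex, and `S(h,d)`
is obtained from `d+1` disjoint copies of `S(h-1,d)` by adding one dominant
vertex.  Concretely: vertices are lists, with adjacency given by the strict
prefix (ancestor/descendant) relation. -/
def stdS (h d : ℕ) : SimpleGraph (SVert h d) where
  Adj u v := u ≠ v ∧ (u.1 <+: v.1 ∨ v.1 <+: u.1)
  symm := ⟨fun _ _ h => ⟨h.1.symm, h.2.symm⟩⟩
  loopless := ⟨fun v h => h.1 rfl⟩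

instance (h d : ℕ) : Finite (SVert h d) :=
  (List.finite_length_le (Fin (d+1)) h).to_subtype

theorem stdS_aux : ∀ h d (f : SVert h d → Fin h),
    ∃ v, d + 1 ≤ {u | (stdS h d).Adj v u ∧ f u = f v}.ncard := by
  intro h
  induction h with
  | zero => intro d f; exact (f ⟨[], le_refl 0⟩).elim0
  | succ h IH =>
    intro d f
    set r : SVert (h+1) d := ⟨[], by simp⟩ with hr
    set c := f r with hc
    set A := {u | (stdS (h+1) d).Adj r u ∧ f u = f r} with hA
    by_cases hs : ∀ i : Fin (d+1), ∃ u ∈ A, u.1.headI = i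
    · refine ⟨r, ?_⟩
      choose w hw hw' using hs
      have winj : Function.Injective w := by
        intro i j hij
        rw [← hw' i, ← hw' j, hij]
      have : Nat.card (Fin (d+1)) ≤ Nat.card A :=
        Nat.card_le_card_of_injective (fun i => ⟨w i, hw i⟩)
          (fun i j hij => winj (congrArg Subtype.val hij))
      simpa [Set.ncard_eq_toFinset_card', Nat.card_coe_set_eq] using this
    · push_neg at hs
      obtain ⟨i, hi⟩ := hs
      -- no vertex starting with i has colour c (vertices starting with i are ≠ r, adjacent to r)
      set e : SVert h d → SVert (h+1) d := fun l => ⟨i :: l.1, by simpa using Nat.succ_le_succ l.2⟩ with he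
      have hene : ∀ l, f (e l) ≠ c := by
        intro l hcl
        refine hi (e l) ⟨⟨?_, Or.inl List.nil_prefix⟩, hcl⟩ rfl
        intro h'
        simpa using congrArg Subtype.val h'
      have hsome : ∀ l, (finSuccEquiv' c (f (e l))).isSome := by
        intro l
        rw [Option.isSome_iff_ne_none]
        intro hn
        exact hene l ((finSuccEquiv' c).injective (hn.trans (finSuccEquiv'_at c).symm))
      set g : SVert h d → Fin h := fun l => (finSuccEquiv' c (f (e l))).get (hsome l) with hg
      obtain ⟨v, hv⟩ := IH d g
      refine ⟨e v, ?_⟩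
      have einj : Function.Injective e := by
        intro a b hab
        exact Subtype.ext (List.cons_injective (congrArg Subtype.val hab))
      have hadj : ∀ a b, (stdS h d).Adj a b → (stdS (h+1) d).Adj (e a) (e b) := by
        intro a b ⟨hne, hp⟩
        refine ⟨fun h' => hne (einj h'), ?_⟩
        rcases hp with hp | hp
        · exact Or.inl (List.cons_prefix_cons.mpr ⟨rfl, hp⟩)
        · exact Or.inr (List.cons_prefix_cons.mpr ⟨rfl, hp⟩)
      have hcol : ∀ a b, g a = g b → f (e a) = f (e b) := by
        intro a b hab
        have : finSuccEquiv' c (f (e a)) = finSuccEquiv' c (f (e b)) := by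
          simpa only [hg, Option.some_get] using congrArg Option.some hab
        exact (finSuccEquiv' c).injective this
      have hsub : e '' {u | (stdS h d).Adj v u ∧ g u = g v} ⊆
          {u | (stdS (h+1) d).Adj (e v) u ∧ f u = f (e v)} := by
        rintro _ ⟨u, ⟨hu1, hu2⟩, rfl⟩
        exact ⟨hadj v u hu1, hcol u v hu2⟩
      calc d + 1 ≤ {u | (stdS h d).Adj v u ∧ g u = g v}.ncard := hv
        _ = (e '' {u | (stdS h d).Adj v u ∧ g u = g v}).ncard :=
            (Set.ncard_image_of_injective _ einj).symm
        _ ≤ _ := Set.ncard_le_ncard hsub (Set.toFinite _)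

/-- **Lemma 1 (StandardDefect).** For `h ≥ 1` and `d ≥ 0`, the graph `S(h,d)`
has no `h`-colouring with defect `d`: every `h`-colouring has a vertex with
at least `d+1` neighbours of its own colour. -/
theorem stmt0 (h d : ℕ) (hh : 1 ≤ h) (f : SVert h d → Fin h) :
    ∃ v, d + 1 ≤ {u | (stdS h d).Adj v u ∧ f u = f v}.ncard :=
  stdS_aux h d f
end

section
/- For integers ℓ ≥ k ≥ 1, if every subgraph H of a graph G has a vertex of degree at most k or an edge both of whose endpoints have degree at most ℓ in H, then G is (k+1)-choosable with defect ℓ−k. -/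
open SimpleGraph

variable {V α : Type*}

/-- `G` is `k`-choosable with defect `d`: for every assignment of lists of at
least `k` colours to the vertices, there is a colouring from the lists with
defect `d`. -/
def ChoosableWithDefect (G : SimpleGraph V) (k d : ℕ) : Prop :=
  ∀ L : V → Finset ℕ, (∀ v, k ≤ (L v).card) →
    ∃ f : V → ℕ, (∀ v, f v ∈ L v) ∧ HasDefect G f d

/-- `G` is `k`-choosable with clustering `c`: for every assignment of lists of
at least `k` colours to the vertices, there is a colouring from the lists with
clustering `c`. -/
def ChoosableWithClustering (G : SimpleGraph V) (k c : ℕ) : Prop :=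
  ∀ L : V → Finset ℕ, (∀ v, k ≤ (L v).card) →
    ∃ f : V → ℕ, (∀ v, f v ∈ L v) ∧ HasClustering G f c

set_option linter.unusedSectionVars false

section Aux
variable [Fintype V] [DecidableEq V] (G : SimpleGraph V) [DecidableRel G.Adj] (k ℓ : ℕ)

private lemma natProd (a b : ℕ) (hb : 1 ≤ b) : a + b ≤ (a + 1) * b := by
  have h := Nat.mul_le_mul_left a hb
  rw [mul_one] at h
  calc a + b ≤ a * b + b := Nat.add_le_add_right h b
    _ = (a + 1) * b := by ring

private lemma pigeonAux (F : Finset ℕ) (hF : F.Nonempty) (R : Finset V) (g : V → ℕ) :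
    ∃ a ∈ F, (R.filter (fun u => g u = a)).card * F.card ≤ R.card := by
  obtain ⟨a, haF, hmin⟩ := F.exists_min_image (fun a => (R.filter (fun u => g u = a)).card) hF
  refine ⟨a, haF, ?_⟩
  have h1 : (R.filter (fun u => g u = a)).card * F.card
      = ∑ _b ∈ F, (R.filter (fun u => g u = a)).card := by
    rw [Finset.sum_const, smul_eq_mul, mul_comm]
  have h2 : ∑ b ∈ F, (R.filter (fun u => g u = a)).card
      ≤ ∑ b ∈ F, (R.filter (fun u => g u = b)).card :=
    Finset.sum_le_sum (fun b hb => hmin b hb)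
  have h3 : ∑ b ∈ F, ((R.filter (fun u => g u ∈ F)).filter (fun u => g u = b)).card
      = (R.filter (fun u => g u ∈ F)).card :=
    (Finset.card_eq_sum_card_fiberwise (fun x hx => (Finset.mem_filter.mp hx).2)).symm
  have h4 : ∀ b ∈ F, (R.filter (fun u => g u = b)).card
      = ((R.filter (fun u => g u ∈ F)).filter (fun u => g u = b)).card := by
    intro b hb
    congr 1
    ext u
    simp only [Finset.mem_filter, and_assoc]
    constructor
    · rintro ⟨hu, hgu⟩; exact ⟨hu, hgu ▸ hb, hgu⟩
    · rintro ⟨hu, _, hgu⟩; exact ⟨hu, hgu⟩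
  calc (R.filter (fun u => g u = a)).card * F.card
      ≤ ∑ b ∈ F, (R.filter (fun u => g u = b)).card := h1 ▸ h2
    _ = ∑ b ∈ F, ((R.filter (fun u => g u ∈ F)).filter (fun u => g u = b)).card :=
        Finset.sum_congr rfl h4
    _ = (R.filter (fun u => g u ∈ F)).card := h3
    _ ≤ R.card := Finset.card_le_card (Finset.filter_subset _ _)

private lemma existsGood
    (hyp : ∀ H : G.Subgraph, H.verts.Nonempty →
      (∃ v ∈ H.verts, (H.neighborSet v).ncard ≤ k) ∨
      (∃ u v, H.Adj u v ∧ (H.neighborSet u).ncard ≤ ℓ ∧ (H.neighborSet v).ncard ≤ ℓ))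
    (hkl : k ≤ ℓ) (S : Finset V) (hS : S.Nonempty) :
    ∃ z ∈ S, (S.filter (G.Adj z)).card ≤ ℓ ∧
      ((S.filter (G.Adj z)).filter
        (fun u => ℓ + 1 ≤ (S.filter (G.Adj u)).card)).card ≤ k := by
  let heavy : V → Prop := fun u => ℓ + 1 ≤ (S.filter (G.Adj u)).card
  let H : G.Subgraph :=
    { verts := ↑S
      Adj := fun u v => G.Adj u v ∧ u ∈ S ∧ v ∈ S ∧ (heavy u ∨ heavy v)
      adj_sub := fun h => h.1
      edge_vert := fun h => h.2.1
      symm := ⟨fun u v h => ⟨h.1.symm, h.2.2.1, h.2.1, h.2.2.2.symm⟩⟩ }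
  have hnbhv : ∀ u ∈ S, heavy u → H.neighborSet u = ↑(S.filter (G.Adj u)) := by
    intro u huS hu
    ext w
    simp only [SimpleGraph.Subgraph.mem_neighborSet, Finset.coe_filter, Set.mem_setOf_eq]
    constructor
    · rintro ⟨hadj, _, hwS, _⟩; exact ⟨hwS, hadj⟩
    · rintro ⟨hwS, hadj⟩; exact ⟨hadj, huS, hwS, Or.inl hu⟩
  have hne : H.verts.Nonempty := by
    obtain ⟨x, hx⟩ := hS; exact ⟨x, by exact hx⟩
  rcases hyp H hne with ⟨z, hzS, hz⟩ | ⟨u, v, huv, hu, hv⟩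
  · have hzS' : z ∈ S := by exact hzS
    have hzlight : ¬ heavy z := by
      intro hh
      rw [hnbhv z hzS' hh, Set.ncard_coe_finset] at hz
      simp only [heavy] at hh
      omega
    refine ⟨z, hzS', by simp only [heavy] at hzlight; omega, ?_⟩
    have hsub : (((S.filter (G.Adj z)).filter
        (fun u => ℓ + 1 ≤ (S.filter (G.Adj u)).card) : Finset V) : Set V)
        ⊆ H.neighborSet z := by
      intro u hu
      simp only [Finset.coe_filter, Set.mem_setOf_eq, Finset.mem_filter] at hu
      exact ⟨hu.1.2, hzS', hu.1.1, Or.inr hu.2⟩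
    have h := Set.ncard_le_ncard hsub (Set.toFinite _)
    rw [Set.ncard_coe_finset] at h
    exact le_trans h hz
  · exfalso
    rcases huv.2.2.2 with hh | hh
    · rw [hnbhv u huv.2.1 hh, Set.ncard_coe_finset] at hu
      simp only [heavy] at hh; omega
    · rw [hnbhv v huv.2.2.1 hh, Set.ncard_coe_finset] at hv
      simp only [heavy] at hh; omega

private lemma monoTransferAux (S : Finset V) (z : V) (f' : V → ℕ) (α : ℕ)
    (v : V) (hvz : v ≠ z) :
    (S.filter (fun u => G.Adj v u ∧ Function.update f' z α u = Function.update f' z α v)).card ≤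
      ((S.erase z).filter (fun u => G.Adj v u ∧ f' u = f' v)).card
        + (if G.Adj v z ∧ f' v = α then 1 else 0) := by
  have hfv : Function.update f' z α v = f' v := Function.update_of_ne hvz α f'
  by_cases hcond : G.Adj v z ∧ f' v = α
  · rw [if_pos hcond]
    refine le_trans (Finset.card_le_card (fun u hu => ?_)) (Finset.card_insert_le z _)
    rw [Finset.mem_filter] at hu
    by_cases huz : u = z
    · subst huz; exact Finset.mem_insert_self _ _
    · refine Finset.mem_insert_of_mem (Finset.mem_filter.mpr
        ⟨Finset.mem_erase.mpr ⟨huz, hu.1⟩, hu.2.1, ?_⟩)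
      have h := hu.2.2
      rwa [Function.update_of_ne huz, hfv] at h
  · rw [if_neg hcond, add_zero]
    apply le_of_eq
    apply congrArg Finset.card
    ext u
    simp only [Finset.mem_filter, Finset.mem_erase]
    constructor
    · rintro ⟨huS, hadj, heq⟩
      have huz : u ≠ z := by
        rintro rfl
        rw [Function.update_self, hfv] at heq
        exact hcond ⟨hadj, heq.symm⟩
      refine ⟨⟨huz, huS⟩, hadj, ?_⟩
      rwa [Function.update_of_ne huz, hfv] at heq
    · rintro ⟨⟨huz, huS⟩, hadj, heq⟩
      exact ⟨huS, hadj, by rw [Function.update_of_ne huz, hfv]; exact heq⟩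

private lemma keyLemma (hk : 1 ≤ k) (hkl : k ≤ ℓ)
    (hyp : ∀ H : G.Subgraph, H.verts.Nonempty →
      (∃ v ∈ H.verts, (H.neighborSet v).ncard ≤ k) ∨
      (∃ u v, H.Adj u v ∧ (H.neighborSet u).ncard ≤ ℓ ∧ (H.neighborSet v).ncard ≤ ℓ))
    (L : V → Finset ℕ) (hL : ∀ v, k + 1 ≤ (L v).card) :
    ∀ S : Finset V, ∃ f : V → ℕ, (∀ v, f v ∈ L v) ∧ ∀ v ∈ S,
      (S.filter (fun u => G.Adj v u ∧ f u = f v)).card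
        ≤ min ℓ ((S.filter (G.Adj v)).card) - k := by
  intro S
  induction S using Finset.strongInduction with
  | _ S IH =>
  have hLne : ∀ v, (L v).Nonempty := fun v => Finset.card_pos.mp (by have := hL v; omega)
  rcases S.eq_empty_or_nonempty with rfl | hS
  · exact ⟨fun v => (L v).min' (hLne v), fun v => Finset.min'_mem _ _, by simp⟩
  by_cases hA : ∃ z ∈ S, (S.filter (G.Adj z)).card ≤ k
  · -- Case A : a vertex of low degree; colour it avoiding all its neighbours
    obtain ⟨z, hzS, hzdeg⟩ := hA
    obtain ⟨f', hf'L, hf'⟩ := IH (S.erase z) (Finset.erase_ssubset hzS)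
    have hC : ((S.filter (G.Adj z)).image f').card ≤ k :=
      le_trans Finset.card_image_le hzdeg
    have hF : (L z \ (S.filter (G.Adj z)).image f').Nonempty := by
      have h1 := Finset.le_card_sdiff ((S.filter (G.Adj z)).image f') (L z)
      have h2 := hL z
      exact Finset.card_pos.mp (by omega)
    obtain ⟨α, hα⟩ := hF
    have hαL : α ∈ L z := (Finset.mem_sdiff.mp hα).1
    have hαavoid : ∀ u ∈ S, G.Adj z u → f' u ≠ α := by
      intro u huS hadj h
      exact (Finset.mem_sdiff.mp hα).2
        (Finset.mem_image.mpr ⟨u, Finset.mem_filter.mpr ⟨huS, hadj⟩, h⟩)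
    refine ⟨Function.update f' z α, ?_, ?_⟩
    · intro v
      by_cases hv : v = z
      · subst hv; rw [Function.update_self]; exact hαL
      · rw [Function.update_of_ne hv]; exact hf'L v
    · intro v hvS
      by_cases hvz : v = z
      · subst hvz
        have hz0 : (S.filter (fun u => G.Adj v u ∧
            Function.update f' v α u = Function.update f' v α v)).card = 0 := by
          rw [Finset.card_eq_zero, Finset.filter_eq_empty_iff]
          rintro u huS ⟨hadj, heq⟩
          have huz : u ≠ v := fun h => G.irrefl (h ▸ hadj)
          rw [Function.update_of_ne huz, Function.update_self] at heq
          exact hαavoid u huS hadj heq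
        rw [hz0]; exact Nat.zero_le _
      · have h1 := monoTransferAux G S z f' α v hvz
        have hnomatch : ¬(G.Adj v z ∧ f' v = α) := by
          rintro ⟨hadj, heq⟩; exact hαavoid v hvS hadj.symm heq
        rw [if_neg hnomatch, add_zero] at h1
        have h2 := hf' v (Finset.mem_erase.mpr ⟨hvz, hvS⟩)
        have h3 : ((S.erase z).filter (G.Adj v)).card ≤ (S.filter (G.Adj v)).card :=
          Finset.card_le_card (Finset.filter_subset_filter _ (Finset.erase_subset z S))
        have h4 : min ℓ ((S.erase z).filter (G.Adj v)).card
            ≤ min ℓ (S.filter (G.Adj v)).card := min_le_min le_rfl h3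
        exact le_trans h1 (le_trans h2 (Nat.sub_le_sub_right h4 k))
  · -- Case B : minimum degree at least k+1, use a light vertex with few heavy nbrs
    have hmin : ∀ v ∈ S, k + 1 ≤ (S.filter (G.Adj v)).card := by
      intro v hv
      by_contra h
      exact hA ⟨v, hv, by omega⟩
    obtain ⟨z, hzS, hzlight, hHv⟩ := existsGood G k ℓ hyp hkl S hS
    obtain ⟨f', hf'L, hf'⟩ := IH (S.erase z) (Finset.erase_ssubset hzS)
    set N : Finset V := S.filter (G.Adj z) with hN
    set D : ℕ := N.card with hD
    have hDk : k + 1 ≤ D := hmin z hzS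
    set Hv : Finset V := N.filter (fun u => ℓ + 1 ≤ (S.filter (G.Adj u)).card) with hHvdef
    set t : ℕ := Hv.card with ht
    have htk : t ≤ k := hHv
    set Hc : Finset ℕ := Hv.image f' with hHc
    have hHct : Hc.card ≤ t := Finset.card_image_le
    set F : Finset ℕ := L z \ Hc with hFdef
    have hFcard : k + 1 - t ≤ F.card := by
      have h1 : (L z).card - Hc.card ≤ F.card := by
        rw [hFdef]; exact Finset.le_card_sdiff Hc (L z)
      have h2 := hL z
      omega
    have hFne : F.Nonempty := Finset.card_pos.mp (by omega)
    set R : Finset V := N \ Hv with hR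
    have hRcard : R.card = D - t := by
      rw [hR, Finset.card_sdiff_of_subset (Finset.filter_subset _ _)]
    obtain ⟨α, hαF, hαc⟩ := pigeonAux F hFne R f'
    set c : ℕ := (R.filter (fun u => f' u = α)).card with hc
    have hαL : α ∈ L z := (Finset.mem_sdiff.mp hαF).1
    have hαHc : α ∉ Hc := (Finset.mem_sdiff.mp hαF).2
    -- arithmetic : c ≤ D - k
    have hcDk : c ≤ D - k := by
      have h5 : c * (k + 1 - t) ≤ c * F.card := Nat.mul_le_mul le_rfl hFcard
      have h6 : D - t ≤ (k + 1 - t) * (D - k) := by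
        have e1 : k + 1 - t = (k - t) + 1 := by omega
        have e2 : D - t = (k - t) + (D - k) := by omega
        rw [e1, e2]
        exact natProd (k - t) (D - k) (by omega)
      have h7 : c * (k + 1 - t) ≤ (D - k) * (k + 1 - t) := by
        calc c * (k + 1 - t) ≤ R.card := le_trans h5 hαc
          _ ≤ (k + 1 - t) * (D - k) := by rw [hRcard]; exact h6
          _ = (D - k) * (k + 1 - t) := mul_comm _ _
      exact Nat.le_of_mul_le_mul_right h7 (by omega)
    refine ⟨Function.update f' z α, ?_, ?_⟩
    · intro v
      by_cases hv : v = z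
      · subst hv; rw [Function.update_self]; exact hαL
      · rw [Function.update_of_ne hv]; exact hf'L v
    · intro v hvS
      by_cases hvz : v = z
      · subst hvz
        -- mono degree of z is at most c
        have hsub : (S.filter (fun u => G.Adj v u ∧
            Function.update f' v α u = Function.update f' v α v))
            ⊆ R.filter (fun u => f' u = α) := by
          intro u hu
          rw [Finset.mem_filter] at hu
          obtain ⟨huS, hadj, heq⟩ := hu
          have huz : u ≠ v := fun h => G.irrefl (h ▸ hadj)
          rw [Function.update_of_ne huz, Function.update_self] at heq
          have huN : u ∈ N := Finset.mem_filter.mpr ⟨huS, hadj⟩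
          have huHv : u ∉ Hv := by
            intro hmem
            exact hαHc (Finset.mem_image.mpr ⟨u, hmem, heq⟩)
          exact Finset.mem_filter.mpr ⟨Finset.mem_sdiff.mpr ⟨huN, huHv⟩, heq⟩
        have hmono : (S.filter (fun u => G.Adj v u ∧
            Function.update f' v α u = Function.update f' v α v)).card ≤ c :=
          Finset.card_le_card hsub
        have hminD : min ℓ (S.filter (G.Adj v)).card = D := by
          rw [← hN, ← hD]; exact min_eq_right hzlight
        rw [hminD]
        exact le_trans hmono hcDk
      · have h1 := monoTransferAux G S z f' α v hvz
        have h2 := hf' v (Finset.mem_erase.mpr ⟨hvz, hvS⟩)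
        by_cases hcond : G.Adj v z ∧ f' v = α
        · rw [if_pos hcond] at h1
          -- v is a light neighbour of z
          have hvN : v ∈ N := Finset.mem_filter.mpr ⟨hvS, hcond.1.symm⟩
          have hvHv : v ∉ Hv := by
            intro hmem
            exact hαHc (Finset.mem_image.mpr ⟨v, hmem, hcond.2⟩)
          have hvlight : (S.filter (G.Adj v)).card ≤ ℓ := by
            by_contra h
            exact hvHv (Finset.mem_filter.mpr ⟨hvN, by omega⟩)
          have hvmin : k + 1 ≤ (S.filter (G.Adj v)).card := hmin v hvS
          have hdeg : ((S.erase z).filter (G.Adj v)).card = (S.filter (G.Adj v)).card - 1 := by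
            rw [Finset.filter_erase]
            exact Finset.card_erase_of_mem (Finset.mem_filter.mpr ⟨hzS, hcond.1⟩)
          rw [hdeg] at h2
          have hm1 : min ℓ ((S.filter (G.Adj v)).card - 1) = (S.filter (G.Adj v)).card - 1 :=
            min_eq_right (by omega)
          have hm2 : min ℓ (S.filter (G.Adj v)).card = (S.filter (G.Adj v)).card :=
            min_eq_right hvlight
          rw [hm1] at h2
          rw [hm2]
          omega
        · rw [if_neg hcond, add_zero] at h1
          have h3 : ((S.erase z).filter (G.Adj v)).card ≤ (S.filter (G.Adj v)).card :=
            Finset.card_le_card (Finset.filter_subset_filter _ (Finset.erase_subset z S))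
          have h4 : min ℓ ((S.erase z).filter (G.Adj v)).card
              ≤ min ℓ (S.filter (G.Adj v)).card := min_le_min le_rfl h3
          exact le_trans h1 (le_trans h2 (Nat.sub_le_sub_right h4 k))

end Aux

/-- **Lemma 7 (light).** For `ℓ ≥ k ≥ 1`, if every (non-empty) subgraph `H` of
`G` has a vertex of degree at most `k` or an `ℓ`-light edge (an edge both of
whose endpoints have degree at most `ℓ` in `H`), then `G` is `(k+1)`-choosable
with defect `ℓ - k`. -/
theorem stmt3 [Fintype V] (G : SimpleGraph V) (k ℓ : ℕ) (hk : 1 ≤ k) (hkl : k ≤ ℓ)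
    (hyp : ∀ H : G.Subgraph, H.verts.Nonempty →
      (∃ v ∈ H.verts, (H.neighborSet v).ncard ≤ k) ∨
      (∃ u v, H.Adj u v ∧ (H.neighborSet u).ncard ≤ ℓ ∧ (H.neighborSet v).ncard ≤ ℓ)) :
    ChoosableWithDefect G (k + 1) (ℓ - k) := by
  classical
  intro L hL
  obtain ⟨f, hfL, hf⟩ := keyLemma G k ℓ hk hkl hyp L hL Finset.univ
  refine ⟨f, hfL, fun v => ?_⟩
  have h := hf v (Finset.mem_univ v)
  have hset : {u | G.Adj v u ∧ f u = f v}
      = ↑(Finset.univ.filter (fun u => G.Adj v u ∧ f u = f v)) := by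
    ext u; simp
  rw [hset, Set.ncard_coe_finset]
  exact le_trans h (Nat.sub_le_sub_right (min_le_left _ _) k)
end

section
/- Every outerplanar graph is 2-colourable so that each monochromatic component is a path (in particular, with defect 2). -/
open SimpleGraph

variable {V α : Type*}

/-- `H` is a minor of `G`: there is a family of non-empty, connected, pairwise
disjoint branch sets in `G`, one for each vertex of `H`, with an edge of `G`
between the branch sets of any two adjacent vertices of `H`. -/
def IsMinor {W V : Type*} (H : SimpleGraph W) (G : SimpleGraph V) : Prop :=
  ∃ B : W → Set V,
    (∀ w, (B w).Nonempty) ∧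
    (∀ w, (G.induce (B w)).Connected) ∧
    (Pairwise fun w w' => Disjoint (B w) (B w')) ∧
    (∀ w w', H.Adj w w' → ∃ u ∈ B w, ∃ v ∈ B w', G.Adj u v)

/-- A graph is outerplanar iff it has no `K₄` minor and no `K_{2,3}` minor. -/
def Outerplanar (G : SimpleGraph V) : Prop :=
  ¬ IsMinor (completeGraph (Fin 4)) G ∧
  ¬ IsMinor (completeBipartiteGraph (Fin 2) (Fin 3)) G

/-! ### Helpers -/

noncomputable def grt (G : SimpleGraph V) (v : V) : V := (G.connectedComponentMk v).out

lemma grt_reachable (G : SimpleGraph V) (v : V) : G.Reachable (grt G v) v :=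
  ConnectedComponent.exact ((G.connectedComponentMk v).out_eq)

lemma grt_adj {G : SimpleGraph V} {u v : V} (h : G.Adj u v) : grt G u = grt G v := by
  unfold grt
  rw [ConnectedComponent.sound h.reachable]

noncomputable def gcol (G : SimpleGraph V) (v : V) : Fin 2 :=
  if Even (G.dist (grt G v) v) then 0 else 1

lemma mono_adj_dist {G : SimpleGraph V} {u v : V}
    (h : G.Adj u v) (hc : gcol G u = gcol G v) :
    grt G u = grt G v ∧ G.dist (grt G u) u = G.dist (grt G u) v ∧ 1 ≤ G.dist (grt G u) u := by
  have hr : grt G u = grt G v := grt_adj h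
  have h1 : G.Reachable (grt G u) u := grt_reachable G u
  have h2 : G.Reachable (grt G u) v := by rw [hr]; exact grt_reachable G v
  obtain ⟨p, hp⟩ := h1.exists_walk_length_eq_dist
  obtain ⟨q, hq⟩ := h2.exists_walk_length_eq_dist
  have b1 : G.dist (grt G u) v ≤ G.dist (grt G u) u + 1 := by
    have := dist_le (p.concat h)
    simpa [Walk.length_concat, hp] using this
  have b2 : G.dist (grt G u) u ≤ G.dist (grt G u) v + 1 := by
    have := dist_le (q.concat h.symm)
    simpa [Walk.length_concat, hq] using this
  have hpar : G.dist (grt G u) u % 2 = G.dist (grt G u) v % 2 := by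
    unfold gcol at hc
    rw [← hr] at hc
    split_ifs at hc with e1 e2 e2
    · rw [Nat.even_iff] at e1 e2; omega
    · exact absurd hc (by decide)
    · exact absurd hc (by decide)
    · rw [Nat.even_iff] at e1 e2; omega
  have heq : G.dist (grt G u) u = G.dist (grt G u) v := by omega
  refine ⟨hr, heq, ?_⟩
  by_contra hlt
  have h0 : G.dist (grt G u) u = 0 := by omega
  have hu : u = grt G u := (h1.dist_eq_zero_iff.mp h0).symm
  have hv : v = grt G u := (h2.dist_eq_zero_iff.mp (by omega)).symm
  exact h.ne (hu.trans hv.symm)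

lemma mono_walk_dist {G : SimpleGraph V} {f : V → Fin 2} (hf : f = gcol G) {x y : V}
    (p : (monoSubgraph G f).Walk x y) :
    ∀ z ∈ p.support, grt G z = grt G x ∧ G.dist (grt G x) z = G.dist (grt G x) x := by
  subst hf
  induction p with
  | nil =>
    intro z hz
    simp only [Walk.support_nil, List.mem_singleton] at hz
    subst hz; exact ⟨rfl, rfl⟩
  | @cons u b w h q ih =>
    intro z hz
    obtain ⟨hr, hd, -⟩ := mono_adj_dist h.1 h.2
    simp only [Walk.support_cons, List.mem_cons] at hz
    rcases hz with rfl | hz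
    · exact ⟨rfl, rfl⟩
    · obtain ⟨hr', hd'⟩ := ih z hz
      rw [← hr] at hr' hd'
      exact ⟨hr', hd'.trans hd.symm⟩

/-- Every vertex at positive distance has a neighbour strictly closer to `r`. -/
lemma exists_closer {G : SimpleGraph V} {r x : V} (hr : G.Reachable r x)
    (hd : G.dist r x ≠ 0) :
    ∃ y, G.Adj y x ∧ G.Reachable r y ∧ G.dist r y + 1 ≤ G.dist r x := by
  obtain ⟨p, hp⟩ := hr.exists_walk_length_eq_dist
  obtain ⟨w, hw⟩ : ∃ w : G.Walk x r, w.length = G.dist r x :=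
    ⟨p.reverse, by simpa using hp⟩
  cases w with
  | nil => rw [dist_self] at hd; exact absurd rfl hd
  | @cons _ y _ h q =>
    refine ⟨y, h.symm, q.reverse.reachable, ?_⟩
    have := dist_le q.reverse
    simp only [Walk.length_reverse] at this
    simp only [Walk.length_cons] at hw
    omega

def gball (G : SimpleGraph V) (r : V) (d : ℕ) : Set V :=
  {x | G.Reachable r x ∧ G.dist r x < d}

lemma gball_mem_root {G : SimpleGraph V} {r : V} {d : ℕ} (hd : 1 ≤ d) : r ∈ gball G r d :=
  ⟨Reachable.refl r, by rw [dist_self]; omega⟩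

lemma gball_connected (G : SimpleGraph V) (r : V) (d : ℕ) (hd : 1 ≤ d) :
    (G.induce (gball G r d)).Connected := by
  have hr : r ∈ gball G r d := gball_mem_root hd
  rw [connected_iff]
  refine ⟨?_, ⟨⟨r, hr⟩⟩⟩
  have H : ∀ (n : ℕ) (x : V) (hx : x ∈ gball G r d), G.dist r x ≤ n →
      (G.induce (gball G r d)).Reachable ⟨x, hx⟩ ⟨r, hr⟩ := by
    intro n
    induction n with
    | zero =>
      intro x hx h0
      have : x = r := (hx.1.dist_eq_zero_iff.mp (by omega)).symm
      subst this
      rfl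
    | succ n ih =>
      intro x hx hle
      by_cases h0 : G.dist r x = 0
      · have : x = r := (hx.1.dist_eq_zero_iff.mp h0).symm
        subst this
        rfl
      · obtain ⟨y, hadj, hry, hlt⟩ := exists_closer hx.1 h0
        have hy : y ∈ gball G r d := ⟨hry, by have := hx.2; omega⟩
        have hA : (G.induce (gball G r d)).Adj ⟨x, hx⟩ ⟨y, hy⟩ := hadj.symm
        exact hA.reachable.trans (ih y hy (by omega))
  intro a b
  exact (H _ a.1 a.2 le_rfl).trans (H _ b.1 b.2 le_rfl).symm

lemma induce_singleton_connected (G : SimpleGraph V) (x : V) :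
    (G.induce {x}).Connected := by
  rw [connected_iff]
  refine ⟨?_, ⟨⟨x, rfl⟩⟩⟩
  rintro ⟨a, ha⟩ ⟨b, hb⟩
  simp only [Set.mem_singleton_iff] at ha hb
  subst ha; subst hb
  rfl

lemma reachable_induce_of_walk {M G : SimpleGraph V} (hMG : M ≤ G) {S : Set V} :
    ∀ {x y : V} (p : M.Walk x y), (∀ z ∈ p.support, z ∈ S) →
      ∀ (hx : x ∈ S) (hy : y ∈ S), (G.induce S).Reachable ⟨x, hx⟩ ⟨y, hy⟩ := by
  intro x y p
  induction p with
  | nil => intro _ hx hy; rfl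
  | @cons u b w h q ih =>
    intro hS hx hy
    have hb : b ∈ S := hS b (by simp)
    have hA : (G.induce S).Adj ⟨u, hx⟩ ⟨b, hb⟩ := hMG h
    exact hA.reachable.trans (ih (fun z hz => hS z (by simp [hz])) hb hy)

lemma walk_support_connected {M G : SimpleGraph V} (hMG : M ≤ G) {x y : V}
    (p : M.Walk x y) : (G.induce {z | z ∈ p.support}).Connected := by
  rw [connected_iff]
  refine ⟨?_, ⟨⟨x, p.start_mem_support⟩⟩⟩
  have H : ∀ (a : {z | z ∈ p.support}),
      (G.induce {z | z ∈ p.support}).Reachable a ⟨y, p.end_mem_support⟩ := by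
    rintro ⟨z, hz⟩
    letI := Classical.decEq V
    exact reachable_induce_of_walk hMG (p.dropUntil z hz)
      (fun w hw => p.support_dropUntil_subset hz hw) hz p.end_mem_support
  intro a b
  exact (H a).trans (H b).symm


lemma mono_acyclic (G : SimpleGraph V)
    (hK : ¬ IsMinor (completeGraph (Fin 4)) G) :
    (monoSubgraph G (gcol G)).IsAcyclic := by
  classical
  intro v c hc
  apply hK
  cases c with
  | nil => exact absurd rfl hc.ne_nil
  | @cons _ a _ h1 q =>
    have hqp : q.IsPath := by
      rw [Walk.isPath_def]
      simpa using hc.2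
    have hql : 2 ≤ q.length := by
      have := hc.three_le_length
      simp only [Walk.length_cons] at this
      omega
    -- distance facts
    have hdistAll := mono_walk_dist rfl (Walk.cons h1 q)
    have hd1 : 1 ≤ G.dist (grt G v) v := (mono_adj_dist h1.1 h1.2).2.2
    have hMG : monoSubgraph G (gcol G) ≤ G := fun _ _ h => h.1
    have hdist : ∀ z ∈ q.support,
        G.Reachable (grt G v) z ∧ G.dist (grt G v) z = G.dist (grt G v) v := by
      intro z hz
      obtain ⟨h1', h2'⟩ := hdistAll z (by simp [hz])
      exact ⟨by rw [← h1']; exact grt_reachable G z, h2'⟩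
    -- decompose q from the v end
    obtain ⟨w, hw⟩ : ∃ w : (monoSubgraph G (gcol G)).Walk v a, w = q.reverse := ⟨_, rfl⟩
    have hwp : w.IsPath := by rw [hw]; exact hqp.reverse
    have hwl : w.length = q.length := by rw [hw, Walk.length_reverse]
    cases w with
    | nil => simp only [Walk.length_nil] at hwl; omega
    | @cons _ w1 _ h2 q2 =>
      have hq2 := (Walk.cons_isPath_iff _ _).mp hwp
      have hq2l : 1 ≤ q2.length := by
        simp only [Walk.length_cons] at hwl; omega
      have hmem2 : ∀ z ∈ q2.support, z ∈ q.support := by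
        intro z hz
        have : z ∈ (Walk.cons h2 q2).support := by simp [Walk.support_cons, hz]
        rw [hw, Walk.support_reverse, List.mem_reverse] at this
        exact this
      -- decompose q2 from the a end
      obtain ⟨w2, hw2⟩ : ∃ w2 : (monoSubgraph G (gcol G)).Walk a w1, w2 = q2.reverse := ⟨_, rfl⟩
      have hw2p : w2.IsPath := by rw [hw2]; exact hq2.1.reverse
      have hw2l : w2.length = q2.length := by rw [hw2, Walk.length_reverse]
      cases w2 with
      | nil => simp only [Walk.length_nil] at hw2l; omega
      | @cons _ b _ h3 q3 =>
        have hq3 := (Walk.cons_isPath_iff _ _).mp hw2p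
        have hmem3 : ∀ z ∈ q3.support, z ∈ q2.support := by
          intro z hz
          have : z ∈ (Walk.cons h3 q3).support := by simp [Walk.support_cons, hz]
          rw [hw2, Walk.support_reverse, List.mem_reverse] at this
          exact this
        -- the four branch sets
        set B0 : Set V := gball G (grt G v) (G.dist (grt G v) v) with hB0
        set S3 : Set V := {z | z ∈ q3.support} with hS3
        -- membership facts
        have hvd : G.Reachable (grt G v) v ∧ G.dist (grt G v) v = G.dist (grt G v) v :=
          ⟨grt_reachable G v, rfl⟩
        have had := hdist a q.start_mem_support
        have hw1q : w1 ∈ q.support := hmem2 w1 (Walk.start_mem_support _)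
        have hw1d := hdist w1 hw1q
        have hS3sub : ∀ z ∈ S3,
            G.Reachable (grt G v) z ∧ G.dist (grt G v) z = G.dist (grt G v) v := by
          intro z hz
          exact hdist z (hmem2 z (hmem3 z hz))
        have hdisjB0 : ∀ z, G.dist (grt G v) z = G.dist (grt G v) v → z ∉ B0 := by
          intro z hz hmem
          rw [hB0] at hmem
          exact absurd hz (by have := hmem.2; omega)
        -- closer neighbours
        obtain ⟨yv, hyv1, hyv2, hyv3⟩ := exists_closer hvd.1 (by omega)
        obtain ⟨ya, hya1, hya2, hya3⟩ := exists_closer had.1 (by rw [had.2]; omega)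
        obtain ⟨yw, hyw1, hyw2, hyw3⟩ := exists_closer hw1d.1 (by rw [hw1d.2]; omega)
        have hyvB : yv ∈ B0 := ⟨hyv2, by omega⟩
        have hyaB : ya ∈ B0 := ⟨hya2, by rw [had.2] at hya3; omega⟩
        have hywB : yw ∈ B0 := ⟨hyw2, by rw [hw1d.2] at hyw3; omega⟩
        -- assemble
        refine ⟨![B0, {v}, {a}, S3], ?_, ?_, ?_, ?_⟩
        · intro i
          fin_cases i <;> simp only [Matrix.cons_val_zero, Matrix.cons_val_one,
            Matrix.head_cons]
          · exact ⟨grt G v, gball_mem_root hd1⟩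
          · exact Set.singleton_nonempty v
          · exact Set.singleton_nonempty a
          · exact ⟨b, q3.start_mem_support⟩
        · intro i
          fin_cases i <;> simp only [Matrix.cons_val_zero, Matrix.cons_val_one,
            Matrix.head_cons]
          · exact gball_connected G _ _ hd1
          · exact induce_singleton_connected G v
          · exact induce_singleton_connected G a
          · exact walk_support_connected hMG q3
        · have d01 : Disjoint B0 {v} := by
            rw [Set.disjoint_singleton_right]; exact hdisjB0 v hvd.2
          have d02 : Disjoint B0 {a} := by
            rw [Set.disjoint_singleton_right]; exact hdisjB0 a had.2
          have d03 : Disjoint B0 S3 := by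
            rw [Set.disjoint_right]
            intro z hz
            exact hdisjB0 z (hS3sub z hz).2
          have d12 : Disjoint ({v} : Set V) {a} := by
            rw [Set.disjoint_singleton]
            exact h1.1.ne
          have d13 : Disjoint ({v} : Set V) S3 := by
            rw [Set.disjoint_singleton_left]
            intro hvS
            exact hq2.2 (hmem3 v hvS)
          have d23 : Disjoint ({a} : Set V) S3 := by
            rw [Set.disjoint_singleton_left]
            exact hq3.2
          intro i j hij
          fin_cases i <;> fin_cases j <;>
            first
              | exact absurd rfl hij
              | (simp only [Matrix.cons_val_zero, Matrix.cons_val_one, Matrix.head_cons]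
                 first
                   | exact d01 | exact d01.symm | exact d02 | exact d02.symm
                   | exact d03 | exact d03.symm | exact d12 | exact d12.symm
                   | exact d13 | exact d13.symm | exact d23 | exact d23.symm)
        · have e01 : ∃ u ∈ B0, ∃ u' ∈ ({v} : Set V), G.Adj u u' :=
            ⟨yv, hyvB, v, rfl, hyv1⟩
          have e02 : ∃ u ∈ B0, ∃ u' ∈ ({a} : Set V), G.Adj u u' :=
            ⟨ya, hyaB, a, rfl, hya1⟩
          have e03 : ∃ u ∈ B0, ∃ u' ∈ S3, G.Adj u u' :=
            ⟨yw, hywB, w1, q3.end_mem_support, hyw1⟩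
          have e12 : ∃ u ∈ ({v} : Set V), ∃ u' ∈ ({a} : Set V), G.Adj u u' :=
            ⟨v, rfl, a, rfl, h1.1⟩
          have e13 : ∃ u ∈ ({v} : Set V), ∃ u' ∈ S3, G.Adj u u' :=
            ⟨v, rfl, w1, q3.end_mem_support, h2.1⟩
          have e23 : ∃ u ∈ ({a} : Set V), ∃ u' ∈ S3, G.Adj u u' :=
            ⟨a, rfl, b, q3.start_mem_support, h3.1⟩
          have sym : ∀ (A B : Set V), (∃ u ∈ A, ∃ u' ∈ B, G.Adj u u') →
              ∃ u ∈ B, ∃ u' ∈ A, G.Adj u u' := by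
            rintro A B ⟨u, hu, u', hu', h⟩
            exact ⟨u', hu', u, hu, h.symm⟩
          intro i j hij
          have hij' : i ≠ j := hij
          fin_cases i <;> fin_cases j <;>
            first
              | exact absurd rfl hij'
              | (simp only [Matrix.cons_val_zero, Matrix.cons_val_one, Matrix.head_cons]
                 first
                   | exact e01 | exact sym _ _ e01 | exact e02 | exact sym _ _ e02
                   | exact e03 | exact sym _ _ e03 | exact e12 | exact sym _ _ e12
                   | exact e13 | exact sym _ _ e13 | exact e23 | exact sym _ _ e23)


lemma mono_deg_le_two [Fintype V] (G : SimpleGraph V)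
    (hK : ¬ IsMinor (completeBipartiteGraph (Fin 2) (Fin 3)) G) (v : V) :
    ((monoSubgraph G (gcol G)).neighborSet v).ncard ≤ 2 := by
  classical
  by_contra hcon
  apply hK
  have h3 : 2 < ((monoSubgraph G (gcol G)).neighborSet v).ncard := by omega
  rw [Set.two_lt_ncard (Set.toFinite _)] at h3
  obtain ⟨a, ha, b, hb, c, hc, hab, hac, hbc⟩ := h3
  rw [mem_neighborSet] at ha hb hc
  -- distance facts
  have hda := mono_adj_dist ha.1 ha.2
  have hdb := mono_adj_dist hb.1 hb.2
  have hdc := mono_adj_dist hc.1 hc.2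
  have hd1 : 1 ≤ G.dist (grt G v) v := hda.2.2
  have hra : G.Reachable (grt G v) a := by rw [hda.1]; exact grt_reachable G a
  have hrb : G.Reachable (grt G v) b := by rw [hdb.1]; exact grt_reachable G b
  have hrc : G.Reachable (grt G v) c := by rw [hdc.1]; exact grt_reachable G c
  set B0 : Set V := gball G (grt G v) (G.dist (grt G v) v) with hB0
  have hdisjB0 : ∀ z, G.dist (grt G v) z = G.dist (grt G v) v → z ∉ B0 := by
    intro z hz hmem
    exact absurd hz (by have := hmem.2; omega)
  -- closer neighbours
  obtain ⟨ya, hya1, hya2, hya3⟩ := exists_closer hra (by omega)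
  obtain ⟨yb, hyb1, hyb2, hyb3⟩ := exists_closer hrb (by omega)
  obtain ⟨yc, hyc1, hyc2, hyc3⟩ := exists_closer hrc (by omega)
  have hyaB : ya ∈ B0 := ⟨hya2, by omega⟩
  have hybB : yb ∈ B0 := ⟨hyb2, by omega⟩
  have hycB : yc ∈ B0 := ⟨hyc2, by omega⟩
  refine ⟨Sum.elim ![B0, {v}] ![{a}, {b}, {c}], ?_, ?_, ?_, ?_⟩
  · rintro (i | i) <;> fin_cases i <;>
      simp only [Sum.elim_inl, Sum.elim_inr, Matrix.cons_val_zero, Matrix.cons_val_one,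
        Matrix.head_cons]
    · exact ⟨grt G v, gball_mem_root hd1⟩
    · exact Set.singleton_nonempty v
    · exact Set.singleton_nonempty a
    · exact Set.singleton_nonempty b
    · exact Set.singleton_nonempty c
  · rintro (i | i) <;> fin_cases i <;>
      simp only [Sum.elim_inl, Sum.elim_inr, Matrix.cons_val_zero, Matrix.cons_val_one,
        Matrix.head_cons]
    · exact gball_connected G _ _ hd1
    · exact induce_singleton_connected G v
    · exact induce_singleton_connected G a
    · exact induce_singleton_connected G b
    · exact induce_singleton_connected G c
  · have dBv : Disjoint B0 {v} := by
      rw [Set.disjoint_singleton_right]; exact hdisjB0 v rfl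
    have dBa : Disjoint B0 {a} := by
      rw [Set.disjoint_singleton_right]; exact hdisjB0 a hda.2.1.symm
    have dBb : Disjoint B0 {b} := by
      rw [Set.disjoint_singleton_right]; exact hdisjB0 b hdb.2.1.symm
    have dBc : Disjoint B0 {c} := by
      rw [Set.disjoint_singleton_right]; exact hdisjB0 c hdc.2.1.symm
    have dva : Disjoint ({v} : Set V) {a} := by
      rw [Set.disjoint_singleton]; exact ha.1.ne
    have dvb : Disjoint ({v} : Set V) {b} := by
      rw [Set.disjoint_singleton]; exact hb.1.ne
    have dvc : Disjoint ({v} : Set V) {c} := by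
      rw [Set.disjoint_singleton]; exact hc.1.ne
    have dab : Disjoint ({a} : Set V) {b} := by
      rw [Set.disjoint_singleton]; exact hab
    have dac : Disjoint ({a} : Set V) {c} := by
      rw [Set.disjoint_singleton]; exact hac
    have dbc : Disjoint ({b} : Set V) {c} := by
      rw [Set.disjoint_singleton]; exact hbc
    rintro (i | i) (j | j) hij <;> fin_cases i <;> fin_cases j <;>
      first
        | exact absurd rfl hij
        | (simp only [Sum.elim_inl, Sum.elim_inr, Matrix.cons_val_zero, Matrix.cons_val_one,
            Matrix.head_cons]
           first
             | exact dBv | exact dBv.symm | exact dBa | exact dBa.symm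
             | exact dBb | exact dBb.symm | exact dBc | exact dBc.symm
             | exact dva | exact dva.symm | exact dvb | exact dvb.symm
             | exact dvc | exact dvc.symm | exact dab | exact dab.symm
             | exact dac | exact dac.symm | exact dbc | exact dbc.symm)
  · have eBa : ∃ u ∈ B0, ∃ u' ∈ ({a} : Set V), G.Adj u u' := ⟨ya, hyaB, a, rfl, hya1⟩
    have eBb : ∃ u ∈ B0, ∃ u' ∈ ({b} : Set V), G.Adj u u' := ⟨yb, hybB, b, rfl, hyb1⟩
    have eBc : ∃ u ∈ B0, ∃ u' ∈ ({c} : Set V), G.Adj u u' := ⟨yc, hycB, c, rfl, hyc1⟩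
    have eva : ∃ u ∈ ({v} : Set V), ∃ u' ∈ ({a} : Set V), G.Adj u u' := ⟨v, rfl, a, rfl, ha.1⟩
    have evb : ∃ u ∈ ({v} : Set V), ∃ u' ∈ ({b} : Set V), G.Adj u u' := ⟨v, rfl, b, rfl, hb.1⟩
    have evc : ∃ u ∈ ({v} : Set V), ∃ u' ∈ ({c} : Set V), G.Adj u u' := ⟨v, rfl, c, rfl, hc.1⟩
    have sym : ∀ (A B : Set V), (∃ u ∈ A, ∃ u' ∈ B, G.Adj u u') →
        ∃ u ∈ B, ∃ u' ∈ A, G.Adj u u' := by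
      rintro A B ⟨u, hu, u', hu', h⟩
      exact ⟨u', hu', u, hu, h.symm⟩
    rintro (i | i) (j | j) hij
    · simp at hij
    · fin_cases i <;> fin_cases j <;>
        simp only [Sum.elim_inl, Sum.elim_inr, Matrix.cons_val_zero, Matrix.cons_val_one,
          Matrix.head_cons] <;>
        first
          | exact eBa | exact eBb | exact eBc
          | exact eva | exact evb | exact evc
    · fin_cases i <;> fin_cases j <;>
        simp only [Sum.elim_inl, Sum.elim_inr, Matrix.cons_val_zero, Matrix.cons_val_one,
          Matrix.head_cons] <;>
        first
          | exact sym _ _ eBa | exact sym _ _ eBb | exact sym _ _ eBc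
          | exact sym _ _ eva | exact sym _ _ evb | exact sym _ _ evc
    · simp at hij

/-- **Theorem (Chartrand–Kronk–Wall / CCW86).** Every (finite) outerplanar
graph is 2-colourable such that each monochromatic component is a path
(for finite graphs: the monochromatic subgraph is acyclic with maximum
degree at most 2); in particular it is 2-colourable with defect 2. -/
theorem stmt5 [Fintype V] (G : SimpleGraph V) (hG : Outerplanar G) :
    ∃ f : V → Fin 2, (monoSubgraph G f).IsAcyclic ∧
      ∀ v, ((monoSubgraph G f).neighborSet v).ncard ≤ 2 := by
  classical
  exact ⟨gcol G, mono_acyclic G hG.1, mono_deg_le_two G hG.2⟩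
end

section
/- For every integer d ≥ 0, every graph with maximum degree Δ is k-colourable with defect d, where k = ⌊Δ/(d+1)⌋ + 1. -/
open SimpleGraph

variable {V α : Type*}

/-- **Theorem (Lovász 1966).** For `d ≥ 0`, every graph with maximum degree
`Δ` is `k`-colourable with defect `d`, where `k = ⌊Δ/(d+1)⌋ + 1`. -/
theorem stmt7 [Fintype V] (G : SimpleGraph V) (Δ d : ℕ)
    (hΔ : ∀ v, (G.neighborSet v).ncard ≤ Δ) :
    ∃ f : V → Fin (Δ / (d + 1) + 1), HasDefect G f d := by
  classical
  set k := Δ / (d + 1) + 1 with hkdef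
  haveI : Nonempty (Fin k) := ⟨⟨0, Nat.succ_pos _⟩⟩
  let W : (V → Fin k) → ℕ := fun f =>
    (Finset.univ.filter (fun p : V × V => G.Adj p.1 p.2 ∧ f p.1 = f p.2)).card
  obtain ⟨f, -, hf⟩ := Finset.exists_min_image (Finset.univ : Finset (V → Fin k)) W
    Finset.univ_nonempty
  refine ⟨f, fun v => ?_⟩
  by_contra hbad
  push_neg at hbad
  set Nv : (V → Fin k) → Finset V :=
    fun h => Finset.univ.filter (fun u => G.Adj v u ∧ h u = h v) with hNv
  have hbad' : d + 1 ≤ (Nv f).card := by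
    have hset : {u | G.Adj v u ∧ f u = f v} = ↑(Nv f) := by
      ext u; simp [hNv]
    rw [hset, Set.ncard_coe_finset] at hbad
    omega
  -- degree bound
  have hdeg : (Finset.univ.filter (fun u => G.Adj v u)).card ≤ Δ := by
    have h1 := hΔ v
    have h2 : (G.neighborSet v).ncard
        = (Finset.univ.filter (fun u => G.Adj v u)).card := by
      rw [Set.ncard_eq_toFinset_card']
      congr 1
      ext u; simp [SimpleGraph.neighborSet]
      exact Set.mem_toFinset
    omega
  -- there is a colour with at most d neighbours of v
  have hex : ∃ c : Fin k,
      (Finset.univ.filter (fun u => G.Adj v u ∧ f u = c)).card ≤ d := by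
    by_contra h
    push_neg at h
    have hsum : (Finset.univ.filter (fun u => G.Adj v u)).card
        = ∑ c : Fin k, (Finset.univ.filter (fun u => G.Adj v u ∧ f u = c)).card := by
      rw [Finset.card_eq_sum_card_fiberwise
        (f := f) (t := (Finset.univ : Finset (Fin k))) (fun x _ => Finset.mem_univ _)]
      refine Finset.sum_congr rfl fun c _ => ?_
      congr 1
      ext u
      simp [Finset.mem_filter, and_assoc]
    have hge : k * (d + 1) ≤ ∑ c : Fin k,
        (Finset.univ.filter (fun u => G.Adj v u ∧ f u = c)).card := by
      calc k * (d + 1) = ∑ _c : Fin k, (d + 1) := by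
            simp [Finset.sum_const, mul_comm]
        _ ≤ _ := Finset.sum_le_sum fun c _ => Nat.succ_le_of_lt (h c)
    have hlt : Δ < k * (d + 1) := by
      have h2 := Nat.div_add_mod Δ (d + 1)
      have h3 := Nat.mod_lt Δ (show 0 < d + 1 by omega)
      have h4 : k * (d + 1) = (d + 1) * (Δ / (d + 1)) + (d + 1) := by
        rw [hkdef]; ring
      rw [h4]
      linarith
    omega
  obtain ⟨c, hc⟩ := hex
  set g : V → Fin k := Function.update f v c with hg
  have hgv : g v = c := Function.update_self v c f
  have hgu : ∀ u, u ≠ v → g u = f u := fun u hu => Function.update_of_ne hu c f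
  have hNvg : (Nv g).card ≤ d := by
    have heq : Nv g = Finset.univ.filter (fun u => G.Adj v u ∧ f u = c) := by
      ext u
      simp only [hNv, Finset.mem_filter, Finset.mem_univ, true_and]
      constructor
      · rintro ⟨ha, he⟩
        refine ⟨ha, ?_⟩
        rwa [hgu u (G.ne_of_adj ha).symm, hgv] at he
      · rintro ⟨ha, he⟩
        refine ⟨ha, ?_⟩
        rw [hgu u (G.ne_of_adj ha).symm, hgv]
        exact he
    rw [heq]
    exact hc
  -- split the weight into: pairs starting at v, pairs ending at v, pairs avoiding v
  have split : ∀ h : V → Fin k, W h =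
      (Finset.univ.filter
        (fun p : V × V => (G.Adj p.1 p.2 ∧ h p.1 = h p.2) ∧ p.1 = v)).card
    + ((Finset.univ.filter
        (fun p : V × V => ((G.Adj p.1 p.2 ∧ h p.1 = h p.2) ∧ ¬p.1 = v) ∧ p.2 = v)).card
    + (Finset.univ.filter
        (fun p : V × V => ((G.Adj p.1 p.2 ∧ h p.1 = h p.2) ∧ ¬p.1 = v) ∧ ¬p.2 = v)).card) := by
    intro h
    have e1 := Finset.card_filter_add_card_filter_not
      (s := Finset.univ.filter (fun p : V × V => G.Adj p.1 p.2 ∧ h p.1 = h p.2))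
      (fun p : V × V => p.1 = v)
    have e2 := Finset.card_filter_add_card_filter_not
      (s := Finset.univ.filter (fun p : V × V => (G.Adj p.1 p.2 ∧ h p.1 = h p.2) ∧ ¬p.1 = v))
      (fun p : V × V => p.2 = v)
    simp only [Finset.filter_filter] at e1 e2
    simp only [W]
    omega
  -- pairs starting at v are in bijection with same-colour neighbours of v
  have hT1 : ∀ h : V → Fin k,
      (Finset.univ.filter
        (fun p : V × V => (G.Adj p.1 p.2 ∧ h p.1 = h p.2) ∧ p.1 = v)).card
        = (Nv h).card := by
    intro h
    apply Finset.card_bij (fun p _ => p.2)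
    · rintro ⟨a, b⟩ hp
      simp only [Finset.mem_filter, Finset.mem_univ, true_and] at hp
      obtain ⟨⟨ha, he⟩, hav⟩ := hp
      subst hav
      simp only [hNv, Finset.mem_filter, Finset.mem_univ, true_and]
      exact ⟨ha, he.symm⟩
    · rintro ⟨a, b⟩ ha ⟨a2, b2⟩ hb hh
      simp only [Finset.mem_filter, Finset.mem_univ, true_and] at ha hb
      simp only at hh
      simp [ha.2, hb.2, hh]
    · intro u hu
      simp only [hNv, Finset.mem_filter, Finset.mem_univ, true_and] at hu
      exact ⟨(v, u), by simp [hu.1, hu.2.symm], rfl⟩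
  -- pairs ending at v likewise
  have hT2 : ∀ h : V → Fin k,
      (Finset.univ.filter
        (fun p : V × V => ((G.Adj p.1 p.2 ∧ h p.1 = h p.2) ∧ ¬p.1 = v) ∧ p.2 = v)).card
        = (Nv h).card := by
    intro h
    apply Finset.card_bij (fun p _ => p.1)
    · rintro ⟨a, b⟩ hp
      simp only [Finset.mem_filter, Finset.mem_univ, true_and] at hp
      obtain ⟨⟨⟨ha, he⟩, hav⟩, hbv⟩ := hp
      subst hbv
      simp only [hNv, Finset.mem_filter, Finset.mem_univ, true_and]
      exact ⟨ha.symm, he⟩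
    · rintro ⟨a, b⟩ ha ⟨a2, b2⟩ hb hh
      simp only [Finset.mem_filter, Finset.mem_univ, true_and] at ha hb
      simp only at hh
      simp [ha.2, hb.2, hh]
    · intro u hu
      simp only [hNv, Finset.mem_filter, Finset.mem_univ, true_and] at hu
      refine ⟨(u, v), ?_, rfl⟩
      simp only [Finset.mem_filter, Finset.mem_univ, true_and]
      exact ⟨⟨⟨hu.1.symm, hu.2⟩, (G.ne_of_adj hu.1).symm⟩, by trivial⟩
  -- pairs avoiding v are unaffected by the recolouring
  have hT3 : (Finset.univ.filter
        (fun p : V × V => ((G.Adj p.1 p.2 ∧ f p.1 = f p.2) ∧ ¬p.1 = v) ∧ ¬p.2 = v))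
      = (Finset.univ.filter
        (fun p : V × V => ((G.Adj p.1 p.2 ∧ g p.1 = g p.2) ∧ ¬p.1 = v) ∧ ¬p.2 = v)) := by
    apply Finset.filter_congr
    intro p _
    by_cases h1 : p.1 = v
    · simp [h1]
    · by_cases h2 : p.2 = v
      · simp [h2]
      · simp [h1, h2, hgu _ h1, hgu _ h2]
  have hT3' := congrArg Finset.card hT3
  have key : W g < W f := by
    have sf := split f
    have sg := split g
    rw [hT1 f, hT2 f] at sf
    rw [hT1 g, hT2 g] at sg
    omega
  have := hf g (Finset.mem_univ g)
  omega
end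

section
/- For integers Δ > d ≥ 1, the clustered chromatic number of the class of graphs with maximum degree at most Δ is at most (⌊Δ/(d+1)⌋ + 1) times the clustered chromatic number of the class of graphs with maximum degree at most d. -/
open SimpleGraph

variable {V α : Type*}

/-- A class of (finite, labelled) graphs. -/
abbrev GraphClass := Set (Σ n : ℕ, SimpleGraph (Fin n))

/-- The clustered chromatic number of the class `𝒢` is at most `k`:
for some `c`, every graph in `𝒢` is `k`-colourable with clustering `c`. -/
def ClusChromLE (𝒢 : GraphClass) (k : ℕ) : Prop :=
  ∃ c : ℕ, ∀ G, G ∈ 𝒢 → ∃ f : Fin G.1 → Fin k, HasClustering G.2 f c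

/-- `𝒟 Δ` is the class of graphs with maximum degree at most `Δ`. -/
def DClass (Δ : ℕ) : GraphClass :=
  {G | ∀ v, (G.2.neighborSet v).ncard ≤ Δ}

open Finset in
lemma exists_defect (n t d Δ : ℕ) (ht : 0 < t) (hΔt : Δ < t * (d + 1))
    (G : SimpleGraph (Fin n)) (hG : ∀ v, (G.neighborSet v).ncard ≤ Δ) :
    ∃ g : Fin n → Fin t, HasDefect G g d := by
  classical
  set m : (Fin n → Fin t) → ℕ :=
    fun g => ∑ u : Fin n, ∑ x : Fin n, if G.Adj u x ∧ g u = g x then 1 else 0 with hm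
  have hne : (univ : Finset (Fin n → Fin t)).Nonempty :=
    ⟨fun _ => ⟨0, ht⟩, mem_univ _⟩
  obtain ⟨g, -, hmin⟩ := Finset.exists_min_image univ m hne
  refine ⟨g, ?_⟩
  intro v
  by_contra hbad
  push_neg at hbad
  -- counting function
  set a : Fin t → ℕ := fun j => (univ.filter fun x => G.Adj v x ∧ g x = j).card with ha
  have hncard : {u | G.Adj v u ∧ g u = g v}.ncard = a (g v) := by
    rw [show {u | G.Adj v u ∧ g u = g v} = ↑(univ.filter fun x => G.Adj v x ∧ g x = g v) by
      ext u; simp, Set.ncard_coe_finset]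
  have hdlt : d < a (g v) := by rw [← hncard]; exact hbad
  -- sum of a over colours equals number of neighbours
  have hsum : ∑ j : Fin t, a j ≤ Δ := by
    have h1 : (univ.filter fun x => G.Adj v x).card = ∑ j : Fin t, a j := by
      refine (Finset.card_eq_sum_card_fiberwise (f := g) (fun x _ => mem_univ _)).trans ?_
      refine Finset.sum_congr rfl fun j _ => ?_
      rw [Finset.filter_filter]
    have h2 : (G.neighborSet v).ncard = (univ.filter fun x => G.Adj v x).card := by
      rw [show G.neighborSet v = ↑(univ.filter fun x => G.Adj v x) by ext u; simp [neighborSet],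
        Set.ncard_coe_finset]
    rw [← h1, ← h2]; exact hG v
  -- pigeonhole: some colour j with a j ≤ d
  have hj : ∃ j : Fin t, a j ≤ d := by
    by_contra hall
    push_neg at hall
    have : t * (d + 1) ≤ ∑ j : Fin t, a j := by
      calc t * (d + 1) = ∑ _j : Fin t, (d + 1) := by simp [mul_comm]
        _ ≤ ∑ j : Fin t, a j := Finset.sum_le_sum fun j _ => hall j
    omega
  obtain ⟨j, hj⟩ := hj
  -- recolour v with j
  set g' : Fin n → Fin t := Function.update g v j with hg'
  -- decompose m
  have decomp : ∀ h : Fin n → Fin t, h v = h v →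
      m h = (∑ x : Fin n, if G.Adj v x ∧ h v = h x then 1 else 0)
          + ((∑ u ∈ univ.erase v, if G.Adj u v ∧ h u = h v then 1 else 0)
          + ∑ u ∈ univ.erase v, ∑ x ∈ univ.erase v, if G.Adj u x ∧ h u = h x then 1 else 0) := by
    intro h _
    have outer : ∀ F : Fin n → ℕ, ∑ u : Fin n, F u = F v + ∑ u ∈ univ.erase v, F u :=
      fun F => (Finset.add_sum_erase univ F (mem_univ v)).symm
    calc m h = ∑ u : Fin n, ∑ x : Fin n, (if G.Adj u x ∧ h u = h x then 1 else 0) := rfl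
      _ = (∑ x : Fin n, if G.Adj v x ∧ h v = h x then 1 else 0)
          + ∑ u ∈ univ.erase v, ∑ x : Fin n, (if G.Adj u x ∧ h u = h x then 1 else 0) :=
        outer _
      _ = (∑ x : Fin n, if G.Adj v x ∧ h v = h x then 1 else 0)
          + ((∑ u ∈ univ.erase v, if G.Adj u v ∧ h u = h v then 1 else 0)
          + ∑ u ∈ univ.erase v, ∑ x ∈ univ.erase v, if G.Adj u x ∧ h u = h x then 1 else 0) := by
        congr 1
        rw [← Finset.sum_add_distrib]
        exact Finset.sum_congr rfl fun u _ => by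
          rw [← Finset.add_sum_erase univ (fun x => if G.Adj u x ∧ h u = h x then 1 else 0) (mem_univ v)]
  have S_eq : (∑ u ∈ univ.erase v, ∑ x ∈ univ.erase v, if G.Adj u x ∧ g' u = g' x then 1 else 0)
      = ∑ u ∈ univ.erase v, ∑ x ∈ univ.erase v, if G.Adj u x ∧ g u = g x then 1 else 0 := by
    refine Finset.sum_congr rfl fun u hu => Finset.sum_congr rfl fun x hx => ?_
    rw [hg', Function.update_of_ne (Finset.ne_of_mem_erase hu),
      Function.update_of_ne (Finset.ne_of_mem_erase hx)]
  have row : ∀ (h : Fin n → Fin t) (jj : Fin t), h v = jj →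
      (∑ x : Fin n, if G.Adj v x ∧ h v = h x then 1 else 0)
      = (univ.filter fun x => G.Adj v x ∧ h x = jj).card := by
    intro h jj hv
    rw [Finset.card_filter]
    refine Finset.sum_congr rfl fun x _ => ?_
    subst hv
    by_cases hadj : G.Adj v x <;> simp [hadj, eq_comm]
  have col : ∀ (h : Fin n → Fin t) (jj : Fin t), h v = jj →
      (∑ u ∈ univ.erase v, if G.Adj u v ∧ h u = h v then 1 else 0)
      = (univ.filter fun x => G.Adj v x ∧ h x = jj).card := by
    intro h jj hv
    rw [Finset.card_filter]
    rw [Finset.sum_erase univ (by simp [G.irrefl])]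
    refine Finset.sum_congr rfl fun x _ => ?_
    subst hv
    by_cases hadj : G.Adj v x
    · simp [hadj, hadj.symm]
    · simp [hadj]
      exact fun h' => absurd h'.symm hadj
  -- a j for g' equals a j
  have hfilter : (univ.filter fun x => G.Adj v x ∧ g' x = j) = (univ.filter fun x => G.Adj v x ∧ g x = j) := by
    refine Finset.filter_congr fun x _ => ?_
    by_cases hx : x = v
    · subst hx; simp [G.irrefl]
    · rw [hg', Function.update_of_ne hx]
  have hmg : m g = a (g v) + (a (g v) + ∑ u ∈ univ.erase v, ∑ x ∈ univ.erase v, if G.Adj u x ∧ g u = g x then 1 else 0) := by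
    rw [decomp g rfl, row g (g v) rfl, col g (g v) rfl]
  have hmg' : m g' = a j + (a j + ∑ u ∈ univ.erase v, ∑ x ∈ univ.erase v, if G.Adj u x ∧ g u = g x then 1 else 0) := by
    have hv' : g' v = j := Function.update_self v j g
    rw [decomp g' rfl, row g' j hv', col g' j hv', S_eq, ha, hfilter]
  have := hmin g' (mem_univ _)
  omega


open Finset in
/-- **Lemma 21 (MaxDegreeBlowUp).** For `Δ > d ≥ 1`,
`χ⋆(𝒟_Δ) ≤ (⌊Δ/(d+1)⌋ + 1) · χ⋆(𝒟_d)`: if the class of graphs of maximum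
degree at most `d` has clustered chromatic number at most `k`, then the class
of graphs of maximum degree at most `Δ` has clustered chromatic number at most
`(⌊Δ/(d+1)⌋ + 1) · k`. -/
theorem stmt8 (Δ d : ℕ) (hd : 1 ≤ d) (hΔd : d < Δ) (k : ℕ)
    (hk : ClusChromLE (DClass d) k) :
    ClusChromLE (DClass Δ) ((Δ / (d + 1) + 1) * k) := by
  classical
  obtain ⟨c, hc⟩ := hk
  set t : ℕ := Δ / (d + 1) + 1 with hts
  refine ⟨c, ?_⟩
  rintro ⟨n, G⟩ hGmem
  have hG : ∀ v, (G.neighborSet v).ncard ≤ Δ := hGmem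
  have hΔt : Δ < t * (d + 1) :=
    (Nat.div_lt_iff_lt_mul (Nat.succ_pos d)).mp (Nat.lt_succ_self _)
  obtain ⟨g, hg⟩ := exists_defect n t d Δ (Nat.succ_pos _) hΔt G hG
  -- colour classes
  set S : Fin t → Finset (Fin n) := fun i => univ.filter (fun u => g u = i) with hS
  have memS : ∀ u : Fin n, u ∈ S (g u) := fun u => by simp [hS]
  have memS' : ∀ {u : Fin n} {i : Fin t}, g u = i → u ∈ S i := fun h => by
    simp [hS, h]
  let e : ∀ i : Fin t, {x // x ∈ S i} ≃ Fin (S i).card := fun i => (S i).equivFin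
  -- induced subgraphs
  let H : ∀ i : Fin t, SimpleGraph (Fin (S i).card) := fun i =>
    { Adj := fun a b => G.Adj ((e i).symm a).1 ((e i).symm b).1
      symm := ⟨fun a b h => h.symm⟩
      loopless := ⟨fun a h => G.loopless.irrefl _ h⟩ }
  have hHmem : ∀ i : Fin t, (⟨(S i).card, H i⟩ : Σ n : ℕ, SimpleGraph (Fin n)) ∈ DClass d := by
    intro i a
    have hval : Function.Injective (fun b : Fin (S i).card => ((e i).symm b).1) :=
      Subtype.val_injective.comp (e i).symm.injective
    set u : Fin n := ((e i).symm a).1 with hu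
    have hgu : g u = i := by
      have h2 := ((e i).symm a).2
      simp only [hS, Finset.mem_filter] at h2
      exact h2.2
    have hsub : (fun b : Fin (S i).card => ((e i).symm b).1) '' ((H i).neighborSet a)
        ⊆ {w | G.Adj u w ∧ g w = g u} := by
      rintro w ⟨b, hb, rfl⟩
      refine ⟨hb, ?_⟩
      have := ((e i).symm b).2
      simp only [hS, Finset.mem_filter] at this
      rw [this.2, hgu]
    calc ((H i).neighborSet a).ncard
        = ((fun b : Fin (S i).card => ((e i).symm b).1) '' ((H i).neighborSet a)).ncard :=
          (Set.ncard_image_of_injective _ hval).symm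
      _ ≤ {w | G.Adj u w ∧ g w = g u}.ncard := Set.ncard_le_ncard hsub (Set.toFinite _)
      _ ≤ d := hg u
  -- clustered colourings of each class
  choose f hf using fun i : Fin t => hc _ (hHmem i)
  -- combined colouring
  let F : Fin n → Fin (t * k) := fun u => finProdFinEquiv (g u, f (g u) (e (g u) ⟨u, memS u⟩))
  refine ⟨F, ?_⟩
  intro v
  set i : Fin t := g v with hi
  let φ : Fin n → Fin (S i).card := fun u =>
    if h : g u = i then e i ⟨u, memS' h⟩ else e i ⟨v, memS' rfl⟩
  -- second component of F in terms of φ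
  have Fsnd : ∀ (u : Fin n) (hu : g u = i),
      f (g u) (e (g u) ⟨u, memS u⟩) = f i (φ u) := by
    intro u hu
    have : ∀ (j : Fin t) (hj : g u = j) (hm : u ∈ S j),
        f (g u) (e (g u) ⟨u, memS u⟩) = f j (e j ⟨u, hm⟩) := by
      intro j hj hm
      subst hj
      rfl
    rw [this i hu (memS' hu)]
    simp only [φ, dif_pos hu]
  -- mono edges descend
  have step : ∀ {u w : Fin n}, (monoSubgraph G F).Adj u w → g u = i →
      g w = i ∧ (monoSubgraph (H i) (f i)).Adj (φ u) (φ w) := by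
    intro u w hadj hu
    obtain ⟨hGuw, hFeq⟩ := hadj
    have hpair := finProdFinEquiv.injective hFeq
    have hgw : g w = i := by
      have := congrArg Prod.fst hpair
      simp only at this
      rw [← this, hu]
    have hsnd : f i (φ u) = f i (φ w) := by
      have := congrArg Prod.snd hpair
      simp only at this
      rw [← Fsnd u hu, ← Fsnd w hgw]
      exact this
    refine ⟨hgw, ⟨?_, hsnd⟩⟩
    show G.Adj ((e i).symm (φ u)).1 ((e i).symm (φ w)).1
    have hφu : ((e i).symm (φ u)).1 = u := by
      simp only [φ, dif_pos hu, Equiv.symm_apply_apply]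
    have hφw : ((e i).symm (φ w)).1 = w := by
      simp only [φ, dif_pos hgw, Equiv.symm_apply_apply]
    rw [hφu, hφw]; exact hGuw
  -- walks descend
  have key : ∀ {u w : Fin n}, (monoSubgraph G F).Walk u w → g u = i →
      g w = i ∧ (monoSubgraph (H i) (f i)).Reachable (φ u) (φ w) := by
    intro u w p
    induction p with
    | nil => exact fun hu => ⟨hu, Reachable.refl _⟩
    | cons hadj p ih =>
      intro hu
      obtain ⟨hx, hedge⟩ := step hadj hu
      obtain ⟨hw, hreach⟩ := ih hx
      exact ⟨hw, hedge.reachable.trans hreach⟩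
  -- conclude
  have hsub : φ '' {u | (monoSubgraph G F).Reachable v u}
      ⊆ {b | (monoSubgraph (H i) (f i)).Reachable (φ v) b} := by
    rintro b ⟨u, hu, rfl⟩
    obtain ⟨p⟩ := hu
    exact (key p rfl).2
  have hinj : Set.InjOn φ {u | (monoSubgraph G F).Reachable v u} := by
    intro u hu w hw hφ
    obtain ⟨pu⟩ := hu
    obtain ⟨pw⟩ := hw
    have hgu : g u = i := (key pu rfl).1
    have hgw : g w = i := (key pw rfl).1
    simp only [φ, dif_pos hgu, dif_pos hgw] at hφ
    have := (e i).injective hφ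
    exact congrArg Subtype.val this
  calc {u | (monoSubgraph G F).Reachable v u}.ncard
      = (φ '' {u | (monoSubgraph G F).Reachable v u}).ncard :=
        (Set.ncard_image_of_injOn hinj).symm
    _ ≤ {b | (monoSubgraph (H i) (f i)).Reachable (φ v) b}.ncard :=
        Set.ncard_le_ncard hsub (Set.toFinite _)
    _ ≤ c := hf i (φ v)
end

section
/- For every integer Δ ≥ 2 and every integer c ≥ 3, there is a graph of maximum degree at most Δ that has no (⌊(Δ+6)/4⌋ − 1)-colouring with clustering c. Consequently, the clustered chromatic number of the class of graphs with maximum degree at most Δ is at least ⌊(Δ+6)/4⌋. -/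
open SimpleGraph

variable {V α : Type*}

set_option maxHeartbeats 1600000

namespace ESaux
open Finset



variable {V : Type*}

/-- no cycles of length ≤ c -/
def NSC (G : SimpleGraph V) (c : ℕ) : Prop :=
  ∀ (v : V) (W : G.Walk v v), W.IsCycle → c < W.length

/-- graph on a finset of edges: adjacency = distinct and share a vertex -/
def edgeGraph (s : Finset (Sym2 V)) : SimpleGraph {e // e ∈ s} where
  Adj e e' := e ≠ e' ∧ ∃ w : V, w ∈ e.val ∧ w ∈ e'.val
  symm := ⟨by rintro e e' ⟨h1, w, hw, hw'⟩; exact ⟨h1.symm, w, hw', hw⟩⟩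
  loopless := ⟨fun e h => h.1 rfl⟩

lemma walk_split {G : SimpleGraph V} {u v x y : V} (W : G.Walk x y) (h : s(u,v) ∈ W.edges) :
    (∃ (p : G.Walk x u) (q : G.Walk v y),
      W.edges = p.edges ++ s(u,v) :: q.edges ∧ p.length + 1 + q.length = W.length) ∨
    (∃ (p : G.Walk x v) (q : G.Walk u y),
      W.edges = p.edges ++ s(u,v) :: q.edges ∧ p.length + 1 + q.length = W.length) := by
  induction W with
  | nil => simp at h
  | @cons a b d hadj T ih =>
    rw [SimpleGraph.Walk.edges_cons, List.mem_cons] at h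
    rcases h with h | h
    · rw [Sym2.eq_iff] at h
      rcases h with ⟨ha, hb⟩ | ⟨ha, hb⟩
      · subst ha; subst hb; left
        exact ⟨SimpleGraph.Walk.nil, T, by simp, by simp [Nat.add_comm]⟩
      · subst ha; subst hb; right
        exact ⟨SimpleGraph.Walk.nil, T, by simp [Sym2.eq_swap], by simp [Nat.add_comm]⟩
    · rcases ih h with ⟨p, q, he, hl⟩ | ⟨p, q, he, hl⟩
      · left
        exact ⟨SimpleGraph.Walk.cons hadj p, q, by simp [he],
          by simp [SimpleGraph.Walk.length_cons]; omega⟩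
      · right
        exact ⟨SimpleGraph.Walk.cons hadj p, q, by simp [he],
          by simp [SimpleGraph.Walk.length_cons]; omega⟩

lemma cycle_edge_path {G : SimpleGraph V} {u v w : V} (W : G.Walk w w) (hW : W.IsCycle)
    (h : s(u,v) ∈ W.edges) :
    ∃ (p : G.Walk u v), p.length + 1 = W.length ∧ s(u,v) ∉ p.edges ∧
      ∀ e ∈ p.edges, e ∈ W.edges := by
  have hnd := hW.edges_nodup
  rcases walk_split W h with ⟨p, q, he, hl⟩ | ⟨p, q, he, hl⟩
  · refine ⟨(q.append p).reverse, ?_, ?_, ?_⟩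
    · simp; omega
    · rw [he] at hnd
      simp only [SimpleGraph.Walk.edges_reverse, List.mem_reverse,
        SimpleGraph.Walk.edges_append, List.mem_append]
      have h1 : s(u,v) ∉ p.edges := by
        intro hp
        exact (List.disjoint_of_nodup_append hnd) hp List.mem_cons_self
      have h2 : s(u,v) ∉ q.edges := by
        have := (List.nodup_append.mp hnd).2.1
        simp at this
        exact this.1
      tauto
    · intro e hee
      simp only [SimpleGraph.Walk.edges_reverse, List.mem_reverse,
        SimpleGraph.Walk.edges_append, List.mem_append] at hee
      rw [he]
      rcases hee with h1 | h1 <;> simp [h1]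
  · refine ⟨q.append p, ?_, ?_, ?_⟩
    · simp; omega
    · rw [he] at hnd
      simp only [SimpleGraph.Walk.edges_append, List.mem_append]
      have h1 : s(u,v) ∉ p.edges := by
        intro hp
        exact (List.disjoint_of_nodup_append hnd) hp List.mem_cons_self
      have h2 : s(u,v) ∉ q.edges := by
        have := (List.nodup_append.mp hnd).2.1
        simp at this
        exact this.1
      tauto
    · intro e hee
      simp only [SimpleGraph.Walk.edges_append, List.mem_append] at hee
      rw [he]
      rcases hee with h1 | h1 <;> simp [h1]


lemma ball_card {n : ℕ} (H : SimpleGraph (Fin n)) (r : ℕ)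
    (hdeg : ∀ v, (H.neighborSet v).ncard ≤ r) (u : Fin n) (R : ℕ) :
    ∃ T : Finset (Fin n), (∀ v, (∃ W : H.Walk u v, W.length ≤ R) → v ∈ T) ∧
      T.card ≤ (r+1)^R := by
  classical
  induction R with
  | zero =>
    refine ⟨{u}, ?_, by simp⟩
    rintro v ⟨W, hW⟩
    have := SimpleGraph.Walk.eq_of_length_eq_zero (Nat.le_zero.mp hW)
    simp [← this]
  | succ R ih =>
    obtain ⟨T, hT, hTc⟩ := ih
    refine ⟨T.biUnion (fun w => insert w (H.neighborFinset w)), ?_, ?_⟩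
    · rintro v ⟨W, hW⟩
      have key : ∀ (v : Fin n) (W' : H.Walk v u), W'.length ≤ R + 1 →
          v ∈ T.biUnion (fun w => insert w (H.neighborFinset w)) := by
        intro v W' hW'
        cases W' with
        | nil =>
          have hu : u ∈ T := hT u ⟨SimpleGraph.Walk.nil, by simp⟩
          exact Finset.mem_biUnion.mpr ⟨u, hu, by simp⟩
        | @cons _ z _ hadj T' =>
          have hz : z ∈ T := by
            refine hT z ⟨T'.reverse, ?_⟩
            simp only [SimpleGraph.Walk.length_reverse]
            simp only [SimpleGraph.Walk.length_cons] at hW'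
            omega
          refine Finset.mem_biUnion.mpr ⟨z, hz, ?_⟩
          simp [SimpleGraph.mem_neighborFinset, hadj.symm]
      have := key v W.reverse (by simpa using hW)
      exact this
    · calc (T.biUnion (fun w => insert w (H.neighborFinset w))).card
          ≤ ∑ w ∈ T, (insert w (H.neighborFinset w)).card := Finset.card_biUnion_le
        _ ≤ ∑ w ∈ T, (r + 1) := by
            refine Finset.sum_le_sum fun w _ => ?_
            have h1 : (H.neighborFinset w).card ≤ r := by
              have := hdeg w
              rwa [Set.ncard_eq_toFinset_card'] at this
            calc (insert w (H.neighborFinset w)).card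
                ≤ (H.neighborFinset w).card + 1 := Finset.card_insert_le _ _
              _ ≤ r + 1 := by omega
        _ = T.card * (r + 1) := by simp [Finset.sum_const, Nat.mul_comm]
        _ ≤ (r+1)^R * (r+1) := Nat.mul_le_mul_right _ hTc
        _ = (r+1)^(R+1) := by ring

def spanGraph (s : Finset (Sym2 V)) (t : Finset V) : SimpleGraph {w // w ∈ t} where
  Adj a b := a.val ≠ b.val ∧ s(a.val, b.val) ∈ s
  symm := ⟨by rintro a b ⟨h1, h2⟩; exact ⟨h1.symm, by rwa [Sym2.eq_swap]⟩⟩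
  loopless := ⟨fun a h => h.1 rfl⟩

lemma span_lemma {n : ℕ} {H : SimpleGraph (Fin n)} {c : ℕ} (hNSC : NSC H c)
    (s : Finset (Sym2 (Fin n))) (hs : ∀ e ∈ s, e ∈ H.edgeSet) (hcard : s.card ≤ c)
    (hne : s.Nonempty) (hconn : (edgeGraph s).Preconnected) :
    s.card + 1 ≤ (Finset.univ.filter (fun w => ∃ e ∈ s, w ∈ e)).card := by
  classical
  set t : Finset (Fin n) := Finset.univ.filter (fun w => ∃ e ∈ s, w ∈ e) with ht
  have hmemt : ∀ {w : Fin n} {e : Sym2 (Fin n)}, e ∈ s → w ∈ e → w ∈ t := by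
    intro w e he hw
    simp only [ht, Finset.mem_filter, Finset.mem_univ, true_and]
    exact ⟨e, he, hw⟩
  set K := spanGraph s t with hK
  -- (A) endpoints of one edge are reachable in K
  have hA : ∀ {e : Sym2 (Fin n)} (he : e ∈ s) {w w' : Fin n} (hw : w ∈ e) (hw' : w' ∈ e),
      K.Reachable ⟨w, hmemt he hw⟩ ⟨w', hmemt he hw'⟩ := by
    intro e he w w' hw hw'
    by_cases hww : w = w'
    · subst hww; rfl
    · have he2 : e = s(w, w') := (Sym2.mem_and_mem_iff hww).mp ⟨hw, hw'⟩
      exact SimpleGraph.Adj.reachable ⟨hww, by rwa [← he2]⟩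
  -- (B) K is preconnected
  have hB : K.Preconnected := by
    rintro ⟨a, ha⟩ ⟨b, hb⟩
    simp only [ht, Finset.mem_filter, Finset.mem_univ, true_and] at ha hb
    obtain ⟨ea, hea, haa⟩ := ha
    obtain ⟨eb, heb, hbb⟩ := hb
    have hreach := hconn ⟨ea, hea⟩ ⟨eb, heb⟩
    obtain ⟨W⟩ := hreach
    clear hconn
    have key : ∀ (E E' : {e // e ∈ s}) (W : (edgeGraph s).Walk E E')
        (w w' : Fin n) (hw : w ∈ E.val) (hw' : w' ∈ E'.val),
        K.Reachable ⟨w, hmemt E.2 hw⟩ ⟨w', hmemt E'.2 hw'⟩ := by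
      intro E E' W
      induction W with
      | @nil E0 => intro w w' hw hw'; exact hA E0.2 hw hw'
      | @cons E0 E1 E2 hadj T ih =>
        intro w w' hw hw'
        obtain ⟨hne', x, hx1, hx2⟩ := hadj
        exact (hA E0.2 hw hx1).trans (ih x w' hx2 hw')
    exact key ⟨ea, hea⟩ ⟨eb, heb⟩ W a b haa hbb
  by_cases hacyc : K.IsAcyclic
  · -- tree case
    have hnet : Nonempty {w // w ∈ t} := by
      obtain ⟨e, he⟩ := hne
      induction e using Sym2.ind with
      | _ x y => exact ⟨⟨x, hmemt he (by simp)⟩⟩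
    haveI := hnet
    have htree : K.IsTree := ⟨⟨hB⟩, hacyc⟩
    have hcards := htree.card_edgeFinset
    have hedges : K.edgeFinset.card = s.card := by
      refine Finset.card_bij (fun e _ => Sym2.map Subtype.val e) ?_ ?_ ?_
      · intro e he
        induction e using Sym2.ind with
        | _ a b =>
          rw [SimpleGraph.mem_edgeFinset, SimpleGraph.mem_edgeSet] at he
          simpa using he.2
      · intro e1 h1 e2 h2 hmap
        exact Sym2.map.injective Subtype.val_injective hmap
      · intro e he
        induction e using Sym2.ind with
        | _ x y =>
          have hxt : x ∈ t := hmemt he (by simp)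
          have hyt : y ∈ t := hmemt he (by simp)
          have hxy : x ≠ y := by
            intro hh
            have := H.not_isDiag_of_mem_edgeSet (hs _ he)
            subst hh
            simp at this
          refine ⟨s(⟨x, hxt⟩, ⟨y, hyt⟩), ?_, by simp⟩
          rw [SimpleGraph.mem_edgeFinset, SimpleGraph.mem_edgeSet]
          exact ⟨by simpa using hxy, he⟩
    have : Fintype.card {w // w ∈ t} = t.card := Fintype.card_coe t
    omega
  · -- cycle case: contradiction
    exfalso
    unfold SimpleGraph.IsAcyclic at hacyc
    push_neg at hacyc
    obtain ⟨x, W, hW⟩ := hacyc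
    have hmape : ∀ e' ∈ K.edgeSet, Sym2.map Subtype.val e' ∈ s := by
      intro e' he'
      induction e' using Sym2.ind with
      | _ a b =>
        rw [SimpleGraph.mem_edgeSet] at he'
        simpa using he'.2
    let φ : K →g H := ⟨Subtype.val, fun h => (SimpleGraph.mem_edgeSet H).mp (hs _ h.2)⟩
    have hinj : Function.Injective (φ : {w // w ∈ t} → Fin n) := Subtype.val_injective
    have hcyc2 : (W.map φ).IsCycle :=
      (SimpleGraph.Walk.map_isCycle_iff_of_injective hinj).mpr hW
    have hlen : W.length ≤ s.card := by
      have hnodup := hW.edges_nodup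
      have hnd2 : (W.edges.map (Sym2.map Subtype.val)).Nodup :=
        hnodup.map (Sym2.map.injective Subtype.val_injective)
      have hsub : (W.edges.map (Sym2.map Subtype.val)).toFinset ⊆ s := by
        intro e he
        rw [List.mem_toFinset, List.mem_map] at he
        obtain ⟨e', he', rfl⟩ := he
        exact hmape e' (W.edges_subset_edgeSet he')
      calc W.length = (W.edges.map (Sym2.map Subtype.val)).length := by
            simp [SimpleGraph.Walk.length_edges]
        _ = (W.edges.map (Sym2.map Subtype.val)).toFinset.card :=
            (List.toFinset_card_of_nodup hnd2).symm
        _ ≤ s.card := Finset.card_le_card hsub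
    have := hNSC x.val (W.map φ) hcyc2
    rw [SimpleGraph.Walk.length_map] at this
    omega


lemma low_deg_close {n r c : ℕ} (hc : 3 ≤ c) {H : SimpleGraph (Fin n)}
    (hNSC : NSC H c)
    (hmax : ∀ H' : SimpleGraph (Fin n), (∀ v, (H'.neighborSet v).ncard ≤ r) → NSC H' c →
      H'.edgeSet.ncard ≤ H.edgeSet.ncard)
    {u v : Fin n} (huv : u ≠ v)
    (hu : (H.neighborSet u).ncard < r) (hv : (H.neighborSet v).ncard < r)
    (hdeg : ∀ w, (H.neighborSet w).ncard ≤ r) :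
    ∃ W : H.Walk u v, W.length ≤ c - 1 := by
  classical
  by_cases hadj : H.Adj u v
  · exact ⟨SimpleGraph.Walk.cons hadj SimpleGraph.Walk.nil, by simp; omega⟩
  by_contra hno
  push_neg at hno
  set H' := H ⊔ SimpleGraph.fromEdgeSet {s(u,v)} with hH'
  have hadj' : ∀ a b : Fin n, H'.Adj a b ↔ H.Adj a b ∨ (s(a,b) = s(u,v) ∧ a ≠ b) := by
    intro a b
    simp [hH', SimpleGraph.fromEdgeSet_adj]
  have hE' : H'.edgeSet = insert s(u,v) H.edgeSet := by
    rw [hH', SimpleGraph.edgeSet_sup, SimpleGraph.edgeSet_fromEdgeSet]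
    ext e
    simp only [Set.mem_union, Set.mem_diff, Set.mem_singleton_iff, Set.mem_insert_iff,
      Set.mem_setOf_eq]
    constructor
    · rintro (h | ⟨rfl, -⟩)
      · exact Or.inr h
      · exact Or.inl rfl
    · rintro (rfl | h)
      · refine Or.inr ⟨rfl, ?_⟩
        simp only [Sym2.mem_diagSet, Sym2.mk_isDiag_iff]
        exact huv
      · exact Or.inl h
  have hnotmem : s(u,v) ∉ H.edgeSet := by
    rw [SimpleGraph.mem_edgeSet]; exact hadj
  have hcard' : H'.edgeSet.ncard = H.edgeSet.ncard + 1 := by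
    rw [hE', Set.ncard_insert_of_notMem hnotmem (Set.toFinite _)]
  -- degree condition for H'
  have hdeg' : ∀ w, (H'.neighborSet w).ncard ≤ r := by
    intro w
    by_cases hw1 : w = u
    · subst hw1
      have hsub : H'.neighborSet w ⊆ insert v (H.neighborSet w) := by
        intro x hx
        rw [SimpleGraph.mem_neighborSet, hadj'] at hx
        rcases hx with hx | ⟨hx1, hx2⟩
        · exact Set.mem_insert_of_mem _ hx
        · rw [Sym2.eq_iff] at hx1
          rcases hx1 with ⟨-, rfl⟩ | ⟨h1, h2⟩
          · exact Set.mem_insert _ _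
          · exact absurd h1 huv
      calc (H'.neighborSet w).ncard ≤ (insert v (H.neighborSet w)).ncard :=
            Set.ncard_le_ncard hsub (Set.toFinite _)
        _ ≤ (H.neighborSet w).ncard + 1 := Set.ncard_insert_le _ _
        _ ≤ r := by omega
    by_cases hw2 : w = v
    · subst hw2
      have hsub : H'.neighborSet w ⊆ insert u (H.neighborSet w) := by
        intro x hx
        rw [SimpleGraph.mem_neighborSet, hadj'] at hx
        rcases hx with hx | ⟨hx1, hx2⟩
        · exact Set.mem_insert_of_mem _ hx
        · rw [Sym2.eq_iff] at hx1
          rcases hx1 with ⟨h1, h2⟩ | ⟨h1, h2⟩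
          · exact absurd h1.symm huv
          · subst h2; exact Set.mem_insert _ _
      calc (H'.neighborSet w).ncard ≤ (insert u (H.neighborSet w)).ncard :=
            Set.ncard_le_ncard hsub (Set.toFinite _)
        _ ≤ (H.neighborSet w).ncard + 1 := Set.ncard_insert_le _ _
        _ ≤ r := by omega
    · have hsub : H'.neighborSet w ⊆ H.neighborSet w := by
        intro x hx
        rw [SimpleGraph.mem_neighborSet, hadj'] at hx
        rcases hx with hx | ⟨hx1, hx2⟩
        · exact hx
        · rw [Sym2.eq_iff] at hx1
          rcases hx1 with ⟨h1, h2⟩ | ⟨h1, h2⟩ <;> [exact absurd h1 hw1; exact absurd h1 hw2]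
      exact le_trans (Set.ncard_le_ncard hsub (Set.toFinite _)) (hdeg w)
  -- no short cycles in H'
  have hNSC' : NSC H' c := by
    intro v₀ W hW
    by_contra hlen
    push_neg at hlen
    by_cases he : s(u,v) ∈ W.edges
    · obtain ⟨p, hp1, hp2, hp3⟩ := cycle_edge_path W hW he
      have hpe : ∀ e ∈ p.edges, e ∈ H.edgeSet := by
        intro e hee
        have h1 : e ∈ H'.edgeSet := p.edges_subset_edgeSet hee
        rw [hE'] at h1
        rcases h1 with h1 | h1
        · exact absurd (h1 ▸ hee) hp2
        · exact h1
      have := hno (p.transfer H hpe)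
      rw [SimpleGraph.Walk.length_transfer] at this
      omega
    · have hWe : ∀ e ∈ W.edges, e ∈ H.edgeSet := by
        intro e hee
        have h1 : e ∈ H'.edgeSet := W.edges_subset_edgeSet hee
        rw [hE'] at h1
        rcases h1 with h1 | h1
        · exact absurd (h1 ▸ hee) he
        · exact h1
      have := hNSC v₀ (W.transfer H hWe) (hW.transfer hWe)
      rw [SimpleGraph.Walk.length_transfer] at this
      omega
  have := hmax H' hdeg' hNSC'
  omega

def lineG {N m : ℕ} (H : SimpleGraph (Fin N)) (σv : Fin m → Sym2 (Fin N)) :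
    SimpleGraph (Fin m) where
  Adj i j := i ≠ j ∧ ∃ w, w ∈ σv i ∧ w ∈ σv j
  symm := ⟨by rintro i j ⟨h1, w, hw1, hw2⟩; exact ⟨h1.symm, w, hw2, hw1⟩⟩
  loopless := ⟨fun i h => h.1 rfl⟩

lemma main (Δ c : ℕ) (hΔ : 2 ≤ Δ) (hc : 3 ≤ c) :
    ∃ (m : ℕ) (G : SimpleGraph (Fin m)),
      (∀ v, (G.neighborSet v).ncard ≤ Δ) ∧
      ∀ f : Fin m → Fin ((Δ + 6) / 4 - 1), ¬ HasClustering G f c := by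
  classical
  set k := (Δ + 6) / 4 - 1 with hk
  set r := Δ / 2 + 1 with hr
  have hk1 : 1 ≤ k := by omega
  have hkr : 2 * k ≤ r := by omega
  have hrΔ : 2 * r - 2 ≤ Δ := by omega
  have hr1 : 1 ≤ r := by omega
  set M := (r + 1) ^ (c - 1) with hM
  set N := (c + 1) * M + 1 with hN
  have hMN : M < N := Nat.lt_succ_of_le (Nat.le_mul_of_pos_left M (by omega))
  set B := Fintype.card (Sym2 (Fin N)) with hB
  have hbound : ∀ H : SimpleGraph (Fin N), H.edgeSet.ncard ≤ B := by
    intro H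
    calc H.edgeSet.ncard ≤ (Set.univ : Set (Sym2 (Fin N))).ncard :=
        Set.ncard_le_ncard (Set.subset_univ _) (Set.toFinite _)
      _ = B := by rw [Set.ncard_univ, Nat.card_eq_fintype_card]
  have hpred0 : ∃ H : SimpleGraph (Fin N),
      ((∀ v, (H.neighborSet v).ncard ≤ r) ∧ NSC H c) ∧ H.edgeSet.ncard = 0 := by
    refine ⟨⊥, ⟨?_, ?_⟩, by simp⟩
    · intro v
      have hns : (⊥ : SimpleGraph (Fin N)).neighborSet v = ∅ := by ext w; simp
      simp [hns]
    · intro v W hW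
      cases W with
      | nil => exact absurd hW.three_le_length (by simp)
      | cons h T => simp at h
  obtain ⟨H, hPH, hHcard⟩ :=
    Nat.findGreatest_spec (P := fun t => ∃ H : SimpleGraph (Fin N),
      ((∀ v, (H.neighborSet v).ncard ≤ r) ∧ NSC H c) ∧ H.edgeSet.ncard = t)
      (Nat.zero_le B) hpred0
  have hmax : ∀ H' : SimpleGraph (Fin N),
      (∀ v, (H'.neighborSet v).ncard ≤ r) → NSC H' c →
      H'.edgeSet.ncard ≤ H.edgeSet.ncard := by
    intro H' h1 h2
    rw [hHcard]
    exact Nat.le_findGreatest (hbound H') ⟨H', ⟨h1, h2⟩, rfl⟩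
  -- low-degree vertices confined to a ball
  have hLo : ∃ Lo : Finset (Fin N), (∀ v, (H.neighborSet v).ncard < r → v ∈ Lo) ∧
      Lo.card ≤ M := by
    by_cases hex : ∃ u₀, (H.neighborSet u₀).ncard < r
    · obtain ⟨u₀, hu₀⟩ := hex
      obtain ⟨T, hT, hTc⟩ := ball_card H r hPH.1 u₀ (c - 1)
      refine ⟨T, ?_, hTc⟩
      intro v hvlow
      by_cases hvv : u₀ = v
      · subst hvv; exact hT _ ⟨SimpleGraph.Walk.nil, by simp⟩
      · obtain ⟨W, hW⟩ := low_deg_close hc hPH.2 hmax hvv hu₀ hvlow hPH.1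
        exact hT v ⟨W, hW⟩
    · push_neg at hex
      exact ⟨∅, fun v hv => absurd hv (not_lt.mpr (hex v)), Nat.zero_le _⟩
  have hdegF : ∀ v : Fin N, (H.neighborSet v).ncard = H.degree v := by
    intro v
    rw [← SimpleGraph.card_neighborSet_eq_degree, Set.ncard_eq_toFinset_card', Set.toFinset_card]
  have hedge : H.edgeSet.ncard = H.edgeFinset.card := by
    rw [← SimpleGraph.coe_edgeFinset, Set.ncard_coe_finset]
  -- lower bound on the number of edges
  have hmN : r * (N - M) ≤ 2 * H.edgeFinset.card := by
    obtain ⟨Lo, hLo1, hLo2⟩ := hLo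
    have hge : r * (N - Lo.card) ≤ ∑ v : Fin N, H.degree v := by
      calc r * (N - Lo.card) = ∑ _v ∈ Finset.univ \ Lo, r := by
            rw [Finset.sum_const, smul_eq_mul, Finset.card_sdiff_of_subset (Finset.subset_univ _)]
            simp [Finset.card_univ, mul_comm]
        _ ≤ ∑ v ∈ Finset.univ \ Lo, H.degree v := by
            refine Finset.sum_le_sum fun v hv => ?_
            rw [Finset.mem_sdiff] at hv
            have h2 : ¬ (H.neighborSet v).ncard < r := fun hlt => hv.2 (hLo1 v hlt)
            rw [← hdegF v]
            omega
        _ ≤ ∑ v : Fin N, H.degree v :=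
            Finset.sum_le_sum_of_subset (Finset.sdiff_subset)
    rw [SimpleGraph.sum_degrees_eq_twice_card_edges] at hge
    have h3 : N - M ≤ N - Lo.card := Nat.sub_le_sub_left hLo2 N
    calc r * (N - M) ≤ r * (N - Lo.card) := Nat.mul_le_mul_left r h3
      _ ≤ 2 * H.edgeFinset.card := hge
  set m := H.edgeFinset.card with hm
  have hmlow : k * (N - M) ≤ m := by
    have h1 : 2 * k * (N - M) ≤ r * (N - M) := Nat.mul_le_mul_right _ hkr
    have h2 : 2 * (k * (N - M)) ≤ 2 * m := by rw [← mul_assoc]; omega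
    omega
  have hm1 : 1 ≤ m := by
    calc 1 ≤ k := hk1
      _ = k * 1 := (mul_one k).symm
      _ ≤ k * (N - M) := Nat.mul_le_mul_left k (by omega)
      _ ≤ m := hmlow
  -- the line graph
  set τ : {e // e ∈ H.edgeFinset} ≃ Fin m := Fintype.equivFinOfCardEq (Fintype.card_coe _)
    with hτ
  set σv : Fin m → Sym2 (Fin N) := fun i => (τ.symm i).val with hσv
  have hσinj : Function.Injective σv := fun i j h => τ.symm.injective (Subtype.ext h)
  have hσmem : ∀ i, σv i ∈ H.edgeSet := fun i =>
    SimpleGraph.mem_edgeFinset.mp (τ.symm i).2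
  set G := lineG H σv with hG
  have hrep : ∀ e : Sym2 (Fin N), ∃ a b, e = s(a, b) :=
    fun e => Sym2.ind (fun a b => ⟨a, b, rfl⟩) e
  have hdegG : ∀ i, (G.neighborSet i).ncard ≤ Δ := by
    intro i
    obtain ⟨a, b, hab⟩ := hrep (σv i)
    have hadjab : H.Adj a b := by
      have h0 := hσmem i
      rw [hab] at h0
      exact (H.mem_edgeSet).mp h0
    have hsub : σv '' (G.neighborSet i) ⊆
        (H.incidenceSet a ∪ H.incidenceSet b) \ {σv i} := by
      rintro e ⟨j, hj, rfl⟩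
      obtain ⟨hne, w, hw1, hw2⟩ := hj
      refine ⟨?_, ?_⟩
      · rw [hab, Sym2.mem_iff] at hw1
        rcases hw1 with rfl | rfl
        · exact Or.inl ⟨hσmem j, hw2⟩
        · exact Or.inr ⟨hσmem j, hw2⟩
      · simp only [Set.mem_singleton_iff]
        exact fun hh => hne.symm (hσinj hh)
    have hia : σv i ∈ H.incidenceSet a := ⟨hσmem i, by rw [hab]; simp⟩
    have hib : σv i ∈ H.incidenceSet b := ⟨hσmem i, by rw [hab]; simp⟩
    have hinca : (H.incidenceSet a).ncard = H.degree a := by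
      rw [Set.ncard_eq_toFinset_card', Set.toFinset_card]
      exact H.card_incidenceSet_eq_degree a
    have hincb : (H.incidenceSet b).ncard = H.degree b := by
      rw [Set.ncard_eq_toFinset_card', Set.toFinset_card]
      exact H.card_incidenceSet_eq_degree b
    have hdega : H.degree a ≤ r := by rw [← hdegF]; exact hPH.1 a
    have hdegb : H.degree b ≤ r := by rw [← hdegF]; exact hPH.1 b
    calc (G.neighborSet i).ncard
        = (σv '' (G.neighborSet i)).ncard := (Set.ncard_image_of_injective _ hσinj).symm
      _ ≤ ((H.incidenceSet a ∪ H.incidenceSet b) \ {σv i}).ncard :=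
          Set.ncard_le_ncard hsub (Set.toFinite _)
      _ = ((H.incidenceSet a \ {σv i}) ∪ (H.incidenceSet b \ {σv i})).ncard := by
          rw [Set.union_diff_distrib]
      _ ≤ (H.incidenceSet a \ {σv i}).ncard + (H.incidenceSet b \ {σv i}).ncard :=
          Set.ncard_union_le _ _
      _ = (H.degree a - 1) + (H.degree b - 1) := by
          rw [Set.ncard_diff_singleton_of_mem hia,
              Set.ncard_diff_singleton_of_mem hib, hinca, hincb]
      _ ≤ Δ := by omega
  refine ⟨m, G, hdegG, ?_⟩
  intro f hcl
  set R := monoSubgraph G f with hR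
  have hcl' : ∀ v, {u | R.Reachable v u}.ncard ≤ c := hcl
  haveI : Finite R.ConnectedComponent :=
    Finite.of_surjective R.connectedComponentMk (fun C => C.exists_rep)
  haveI : Fintype R.ConnectedComponent := Fintype.ofFinite _
  set comp : Fin m → R.ConnectedComponent := R.connectedComponentMk with hcomp
  set SC : R.ConnectedComponent → Finset (Fin m) :=
    fun C => Finset.univ.filter (fun i => comp i = C) with hSC
  set spanC : R.ConnectedComponent → Finset (Fin N) :=
    fun C => Finset.univ.filter (fun w => ∃ i, comp i = C ∧ w ∈ σv i) with hspanC
  have hconst : ∀ i j : Fin m, R.Reachable i j → f i = f j := by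
    intro i j hreach
    obtain ⟨W⟩ := hreach
    induction W with
    | nil => rfl
    | cons hadj T ih => exact hadj.2.trans ih
  set colC : R.ConnectedComponent → Fin k :=
    SimpleGraph.ConnectedComponent.lift f (fun v w p _ => hconst v w p.reachable) with hcolC
  have hcol_mk : ∀ i : Fin m, colC (comp i) = f i := fun i => rfl
  have hSCcard : ∀ C, (SC C).card ≤ c := by
    intro C
    obtain ⟨i, hi⟩ := C.exists_rep
    have hi' : comp i = C := hi
    have hset : ↑(SC C) = {u | R.Reachable i u} := by
      ext u
      simp only [hSC, Finset.coe_filter, Set.mem_setOf_eq, Finset.mem_univ, true_and]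
      rw [← hi']
      exact ⟨fun h => (SimpleGraph.ConnectedComponent.eq.mp h).symm,
        fun h => SimpleGraph.ConnectedComponent.eq.mpr h.symm⟩
    have hx := hcl' i
    rw [← hset, Set.ncard_coe_finset] at hx
    exact hx
  have hSCmem : ∀ {i : Fin m} {C}, comp i = C → i ∈ SC C := by
    intro i C h
    simp only [hSC, Finset.mem_filter, Finset.mem_univ, true_and]
    exact h
  have hspan : ∀ C : R.ConnectedComponent, (SC C).card + 1 ≤ (spanC C).card := by
    intro C
    set s : Finset (Sym2 (Fin N)) := (SC C).image σv with hs
    have hscard : s.card = (SC C).card := Finset.card_image_of_injective _ hσinj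
    have hsub : ∀ e ∈ s, e ∈ H.edgeSet := by
      intro e he
      rw [hs, Finset.mem_image] at he
      obtain ⟨i, -, rfl⟩ := he
      exact hσmem i
    have hmem_s : ∀ {i : Fin m}, comp i = C → σv i ∈ s := fun {i} h =>
      Finset.mem_image_of_mem _ (hSCmem h)
    have hsne : s.Nonempty := by
      obtain ⟨i, hi⟩ := C.exists_rep
      exact ⟨σv i, hmem_s hi⟩
    have key : ∀ (i j : Fin m) (W : R.Walk i j) (hi : comp i = C) (hj : comp j = C),
        (edgeGraph s).Reachable ⟨σv i, hmem_s hi⟩ ⟨σv j, hmem_s hj⟩ := by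
      intro i j W
      induction W with
      | @nil i0 => intro hi hj; exact SimpleGraph.Reachable.refl _
      | @cons i0 b j0 hadj T ih =>
        intro hi hj
        have hb : comp b = C :=
          (SimpleGraph.ConnectedComponent.connectedComponentMk_eq_of_adj hadj).symm.trans hi
        obtain ⟨⟨hne0, w, hw1, hw2⟩, hfeq⟩ := hadj
        have hadjE : (edgeGraph s).Adj ⟨σv i0, hmem_s hi⟩ ⟨σv b, hmem_s hb⟩ := by
          refine ⟨?_, w, hw1, hw2⟩
          intro hh
          have hvv : σv i0 = σv b := congrArg (fun x : {e // e ∈ s} => x.val) hh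
          exact hne0 (hσinj hvv)
        exact (SimpleGraph.Adj.reachable hadjE).trans (ih hb hj)
    have hconn : (edgeGraph s).Preconnected := by
      rintro ⟨e, he⟩ ⟨e', he'⟩
      obtain ⟨i, hiC, hie⟩ := Finset.mem_image.mp he
      obtain ⟨j, hjC, hje⟩ := Finset.mem_image.mp he'
      have hiC' : comp i = C := (Finset.mem_filter.mp hiC).2
      have hjC' : comp j = C := (Finset.mem_filter.mp hjC).2
      have hreach : R.Reachable i j := by
        rw [← SimpleGraph.ConnectedComponent.eq]
        exact hiC'.trans hjC'.symm
      obtain ⟨W⟩ := hreach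
      have hk0 := key i j W hiC' hjC'
      subst hie
      subst hje
      exact hk0
    have hsL := span_lemma hPH.2 s hsub (by rw [hscard]; exact hSCcard C) hsne hconn
    have hfil : Finset.univ.filter (fun w => ∃ e ∈ s, w ∈ e) = spanC C := by
      ext w
      simp only [hspanC, Finset.mem_filter, Finset.mem_univ, true_and, hs, Finset.mem_image]
      constructor
      · rintro ⟨e, ⟨i, hiC, rfl⟩, hwe⟩
        exact ⟨i, (Finset.mem_filter.mp hiC).2, hwe⟩
      · rintro ⟨i, hiC, hwi⟩
        exact ⟨σv i, ⟨i, hSCmem hiC, rfl⟩, hwi⟩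
    rw [hfil, hscard] at hsL
    exact hsL
  have hdisj : ∀ C C' : R.ConnectedComponent, C ≠ C' → colC C = colC C' →
      Disjoint (spanC C) (spanC C') := by
    intro C C' hCC hcol
    rw [Finset.disjoint_left]
    intro w hw hw'
    simp only [hspanC, Finset.mem_filter, Finset.mem_univ, true_and] at hw hw'
    obtain ⟨i, hiC, hiw⟩ := hw
    obtain ⟨j, hjC, hjw⟩ := hw'
    have hij : i ≠ j := by
      intro h
      subst h
      exact hCC (hiC.symm.trans hjC)
    have hfij : f i = f j := by
      have e1 : f i = colC C := by rw [← hiC]; exact (hcol_mk i).symm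
      have e2 : f j = colC C' := by rw [← hjC]; exact (hcol_mk j).symm
      rw [e1, e2, hcol]
    have hadj : R.Adj i j := ⟨⟨hij, w, hiw, hjw⟩, hfij⟩
    have : comp i = comp j := SimpleGraph.ConnectedComponent.connectedComponentMk_eq_of_adj hadj
    exact hCC (hiC.symm.trans (this ▸ hjC))
  have h1 : ∑ C : R.ConnectedComponent, (SC C).card = m := by
    have hx := Finset.card_eq_sum_card_fiberwise
      (f := comp) (s := Finset.univ) (t := Finset.univ) (fun x _ => Finset.mem_univ _)
    rw [Finset.card_univ, Fintype.card_fin] at hx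
    rw [← hx]
  have h2 : ∀ t0 : Fin k,
      ∑ C ∈ Finset.univ.filter (fun C => colC C = t0), (spanC C).card ≤ N := by
    intro t0
    have hd : ∀ C ∈ Finset.univ.filter (fun C => colC C = t0),
        ∀ C' ∈ Finset.univ.filter (fun C => colC C = t0), C ≠ C' →
        Disjoint (spanC C) (spanC C') := by
      intro C hC C' hC' hne0
      simp only [Finset.mem_filter] at hC hC'
      exact hdisj C C' hne0 (hC.2.trans hC'.2.symm)
    rw [← Finset.card_biUnion hd]
    calc ((Finset.univ.filter (fun C => colC C = t0)).biUnion spanC).card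
        ≤ (Finset.univ : Finset (Fin N)).card := Finset.card_le_card (Finset.subset_univ _)
      _ = N := by simp
  have h3 : ∑ C : R.ConnectedComponent, (spanC C).card ≤ k * N := by
    rw [← Finset.sum_fiberwise_of_maps_to (g := colC)
      (fun (x : R.ConnectedComponent) (_ : x ∈ Finset.univ) => Finset.mem_univ (colC x))
      (fun C => (spanC C).card)]
    calc ∑ t0 : Fin k, ∑ C ∈ Finset.univ.filter (fun C => colC C = t0), (spanC C).card
        ≤ ∑ _t0 : Fin k, N := Finset.sum_le_sum (fun t0 _ => h2 t0)
      _ = k * N := by simp [Finset.card_univ, mul_comm]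
  have h4 : (c + 1) * m ≤ c * (k * N) := by
    calc (c + 1) * m = ∑ C : R.ConnectedComponent, (c + 1) * (SC C).card := by
          rw [← Finset.mul_sum, h1]
      _ ≤ ∑ C : R.ConnectedComponent, c * ((SC C).card + 1) :=
          Finset.sum_le_sum (fun C _ => by have := hSCcard C; nlinarith)
      _ ≤ ∑ C : R.ConnectedComponent, c * (spanC C).card :=
          Finset.sum_le_sum (fun C _ => Nat.mul_le_mul_left c (hspan C))
      _ = c * ∑ C : R.ConnectedComponent, (spanC C).card := by rw [Finset.mul_sum]
      _ ≤ c * (k * N) := Nat.mul_le_mul_left c h3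
  -- numeric contradiction
  set D := N - M with hD
  have hDsum : M + D = N := Nat.add_sub_cancel' (le_of_lt hMN)
  have hD2 : D = c * M + 1 := by
    have hx : (c + 1) * M = c * M + M := by ring
    omega
  have e1 : (c + 1) * (k * D) ≤ c * (k * (M + D)) := by
    calc (c + 1) * (k * D) ≤ (c + 1) * m := Nat.mul_le_mul_left _ hmlow
      _ ≤ c * (k * N) := h4
      _ = c * (k * (M + D)) := by rw [hDsum]
  rw [hD2] at e1
  nlinarith [e1, hk1]

end ESaux

/-- **Theorem 26 (ADOV03, HST03).** For every `Δ ≥ 2` and every `c ≥ 3`, there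
is a graph with maximum degree at most `Δ` that has no
`(⌊(Δ+6)/4⌋ - 1)`-colouring with clustering `c`.  Consequently the clustered
chromatic number of the class of graphs with maximum degree at most `Δ` is at
least `⌊(Δ+6)/4⌋`. -/
theorem stmt10 (Δ c : ℕ) (hΔ : 2 ≤ Δ) (hc : 3 ≤ c) :
    (∃ (n : ℕ) (G : SimpleGraph (Fin n)),
      (∀ v, (G.neighborSet v).ncard ≤ Δ) ∧
      ∀ f : Fin n → Fin ((Δ + 6) / 4 - 1), ¬ HasClustering G f c) ∧
    ¬ ClusChromLE (DClass Δ) ((Δ + 6) / 4 - 1) := by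
  constructor
  · exact ESaux.main Δ c hΔ hc
  · rintro ⟨c', hall⟩
    obtain ⟨n, G, hdeg, hnf⟩ := ESaux.main Δ (max c' 3) hΔ (le_max_right _ _)
    obtain ⟨f, hf⟩ := hall ⟨n, G⟩ hdeg
    exact hnf f (fun v => le_trans (hf v) (le_max_left _ _))
end

section
/- For all real m > 0 and integers k, d ≥ 1 with 1/k + 1/d ≤ 2/m, every graph G in which every subgraph has average degree at most m is k-choosable with defect d. -/
open SimpleGraph

variable {V α : Type*}

section Stmt11Aux
namespace Stmt11Aux


variable {V : Type*} [Fintype V] [DecidableEq V] (G : SimpleGraph V) [DecidableRel G.Adj]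

def degS (s : Finset V) (v : V) : ℕ := (s.filter fun u => G.Adj v u).card

lemma sum_degS_le (m : ℝ)
    (hmad : ∀ H : G.Subgraph, H.verts.Nonempty →
      2 * (H.edgeSet.ncard : ℝ) ≤ m * H.verts.ncard)
    (s : Finset V) (hs : s.Nonempty) :
    ((∑ v ∈ s, degS G s v : ℕ) : ℝ) ≤ m * s.card := by
  classical
  let G' : SimpleGraph V :=
    { Adj := fun u v => u ∈ s ∧ v ∈ s ∧ G.Adj u v
      symm := by
        constructor
        intro a b h
        exact ⟨h.2.1, h.1, h.2.2.symm⟩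
      loopless := ⟨fun v h => G.loopless.irrefl v h.2.2⟩ }
  haveI : DecidableRel G'.Adj := fun a b =>
    inferInstanceAs (Decidable (a ∈ s ∧ b ∈ s ∧ G.Adj a b))
  let H : G.Subgraph :=
    { verts := ↑s
      Adj := G'.Adj
      adj_sub := fun h => h.2.2
      edge_vert := fun h => h.1
      symm := G'.symm }
  have hHv : H.verts.Nonempty := by
    obtain ⟨v, hv⟩ := hs
    exact ⟨v, by exact_mod_cast hv⟩
  have hHE : H.edgeSet = G'.edgeSet := by
    ext e
    refine Sym2.ind (fun a b => ?_) e
    simp [SimpleGraph.Subgraph.mem_edgeSet, SimpleGraph.mem_edgeSet]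
    exact Iff.rfl
  have hdeg : ∀ v ∈ s, G'.degree v = degS G s v := by
    intro v hv
    unfold degS
    rw [← SimpleGraph.card_neighborFinset_eq_degree]
    congr 1
    ext u
    simp only [SimpleGraph.mem_neighborFinset, Finset.mem_filter]
    constructor
    · rintro ⟨_, hu, ha⟩; exact ⟨hu, ha⟩
    · rintro ⟨hu, ha⟩; exact ⟨hv, hu, ha⟩
  have hdeg0 : ∀ v, v ∉ s → G'.degree v = 0 := by
    intro v hv
    rw [← SimpleGraph.card_neighborFinset_eq_degree]
    rw [Finset.card_eq_zero]
    ext u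
    simp only [SimpleGraph.mem_neighborFinset, Finset.notMem_empty, iff_false]
    rintro ⟨h, -, -⟩
    exact hv h
  have hsum : ∑ v ∈ s, degS G s v = 2 * G'.edgeFinset.card := by
    rw [← SimpleGraph.sum_degrees_eq_twice_card_edges]
    rw [← Finset.sum_subset (Finset.subset_univ s) (fun x _ hx => hdeg0 x hx)]
    exact Finset.sum_congr rfl hdeg |>.symm
  have hcard : H.edgeSet.ncard = G'.edgeFinset.card := by
    rw [hHE, ← SimpleGraph.coe_edgeFinset, Set.ncard_coe_finset]
  have := hmad H hHv
  rw [hcard] at this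
  have hvc : H.verts.ncard = s.card := Set.ncard_coe_finset s
  rw [hvc] at this
  rw [hsum]
  push_cast
  push_cast at this
  linarith



theorem key (m : ℝ) (hm : 0 < m) (k d : ℕ) (hk : 1 ≤ k) (hd : 1 ≤ d)
    (hmkd : m * (k + d) ≤ 2 * (k * d))
    (hmad : ∀ H : G.Subgraph, H.verts.Nonempty →
      2 * (H.edgeSet.ncard : ℝ) ≤ m * H.verts.ncard)
    (L : V → Finset ℕ) (hL : ∀ v, k ≤ (L v).card)
    (hsum_le : ∀ s : Finset V, s.Nonempty →
      ((∑ v ∈ s, degS G s v : ℕ) : ℝ) ≤ m * s.card)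
    (s : Finset V) :
    ∃ f : V → ℕ, (∀ v, f v ∈ L v) ∧
      ∀ v ∈ s, ((s.filter fun u => G.Adj v u ∧ f u = f v).card ≤ d) := by
  induction s using Finset.strongInduction with
  | _ s IH =>
  have hLne : ∀ v, (L v).Nonempty := fun v =>
    Finset.card_pos.mp (lt_of_lt_of_le hk (hL v))
  rcases s.eq_empty_or_nonempty with rfl | hs
  · exact ⟨fun v => (L v).min' (hLne v), fun v => Finset.min'_mem _ _, by simp⟩
  by_cases hred : ∃ v ∈ s, degS G s v < k ∨
      (s.filter fun u => G.Adj v u ∧ d + 1 ≤ degS G s u).card + degS G s v / (d + 1) < k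
  · -- reducible vertex
    obtain ⟨v, hv, hcase⟩ := hred
    obtain ⟨f, hfL, hfdef⟩ := IH (s.erase v) (Finset.erase_ssubset hv)
    -- number of neighbours of v in s.erase v coloured c
    set Nc : ℕ → ℕ := fun c => ((s.erase v).filter fun u => G.Adj v u ∧ f u = c).card with hNcdef
    have hmain : ∃ c ∈ L v, Nc c ≤ d ∧
        ∀ u ∈ s.erase v, G.Adj v u → f u = c → degS G s u ≤ d := by
      rcases hcase with h1 | h2
      · -- low degree: avoid all neighbour colours
        set Bad : Finset ℕ := (s.filter fun u => G.Adj v u).image f with hBad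
        have hBadcard : Bad.card ≤ degS G s v :=
          Finset.card_image_le
        obtain ⟨c, hcL, hcB⟩ : ∃ c ∈ L v, c ∉ Bad := by
          by_contra h
          push_neg at h
          have hsub : L v ⊆ Bad := fun x hx => h x hx
          have := Finset.card_le_card hsub
          have := hL v
          omega
        refine ⟨c, hcL, ?_, ?_⟩
        · have : ((s.erase v).filter fun u => G.Adj v u ∧ f u = c) = ∅ := by
            rw [Finset.eq_empty_iff_forall_notMem]
            intro u hu
            rw [Finset.mem_filter, Finset.mem_erase] at hu
            exact hcB (Finset.mem_image.mpr ⟨u, Finset.mem_filter.mpr ⟨hu.1.2, hu.2.1⟩, hu.2.2⟩)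
          simp [hNcdef, this]
        · intro u hu hadj hfu
          exfalso
          rw [Finset.mem_erase] at hu
          exact hcB (Finset.mem_image.mpr ⟨u, Finset.mem_filter.mpr ⟨hu.2, hadj⟩, hfu⟩)
      · -- general reducible vertex
        set Bad1 : Finset ℕ :=
          (s.filter fun u => G.Adj v u ∧ d + 1 ≤ degS G s u).image f with hBad1
        set Bad2 : Finset ℕ := (L v).filter fun c => d + 1 ≤ Nc c with hBad2
        have hBad1card : Bad1.card ≤ (s.filter fun u => G.Adj v u ∧ d + 1 ≤ degS G s u).card :=
          Finset.card_image_le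
        have hBad2card : Bad2.card ≤ degS G s v / (d + 1) := by
          rw [Nat.le_div_iff_mul_le (by omega : 0 < d + 1)]
          have hdisj : ∀ x ∈ Bad2, ∀ y ∈ Bad2, x ≠ y →
              Disjoint ((s.erase v).filter fun u => G.Adj v u ∧ f u = x)
                ((s.erase v).filter fun u => G.Adj v u ∧ f u = y) := by
            intro x _ y _ hxy
            rw [Finset.disjoint_left]
            intro a ha hb
            rw [Finset.mem_filter] at ha hb
            exact hxy (ha.2.2 ▸ hb.2.2 ▸ rfl)
          have hbu := Finset.card_biUnion hdisj
          have hsub : (Bad2.biUnion fun c => (s.erase v).filter fun u => G.Adj v u ∧ f u = c)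
              ⊆ s.filter fun u => G.Adj v u := by
            intro a ha
            rw [Finset.mem_biUnion] at ha
            obtain ⟨c, -, ha⟩ := ha
            rw [Finset.mem_filter, Finset.mem_erase] at ha
            exact Finset.mem_filter.mpr ⟨ha.1.2, ha.2.1⟩
          have hle := Finset.card_le_card hsub
          rw [hbu] at hle
          have hlower : Bad2.card * (d + 1) ≤ ∑ c ∈ Bad2, Nc c := by
            have h0 := Finset.card_nsmul_le_sum Bad2 Nc (d + 1)
              (fun c hc => (Finset.mem_filter.mp hc).2)
            simpa [smul_eq_mul] using h0
          exact le_trans hlower hle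
        obtain ⟨c, hcL, hcB⟩ : ∃ c ∈ L v, c ∉ Bad1 ∪ Bad2 := by
          by_contra h
          push_neg at h
          have hsub : L v ⊆ Bad1 ∪ Bad2 := fun x hx => h x hx
          have h3 := Finset.card_le_card hsub
          have h4 := Finset.card_union_le Bad1 Bad2
          have h5 := hL v
          omega
        rw [Finset.mem_union, not_or] at hcB
        refine ⟨c, hcL, ?_, ?_⟩
        · by_contra hno
          exact hcB.2 (Finset.mem_filter.mpr ⟨hcL, by omega⟩)
        · intro u hu hadj hfu
          by_contra hbig
          push_neg at hbig
          rw [Finset.mem_erase] at hu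
          exact hcB.1 (Finset.mem_image.mpr
            ⟨u, Finset.mem_filter.mpr ⟨hu.2, hadj, by omega⟩, hfu⟩)
    obtain ⟨c, hcL, hNcd, htiny⟩ := hmain
    refine ⟨Function.update f v c, ?_, ?_⟩
    · intro u
      by_cases hu : u = v
      · subst hu; rw [Function.update_self]; exact hcL
      · rw [Function.update_of_ne hu]; exact hfL u
    · intro u hu
      by_cases huv : u = v
      · subst huv
        have hsub : (s.filter fun x => G.Adj u x ∧ Function.update f u c x = Function.update f u c u)
            ⊆ (s.erase u).filter fun x => G.Adj u x ∧ f x = c := by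
          intro x hx
          rw [Finset.mem_filter] at hx
          obtain ⟨hxs, hadj, hfx⟩ := hx
          have hxu : x ≠ u := fun h => G.loopless.irrefl u (h ▸ hadj)
          rw [Function.update_of_ne hxu, Function.update_self] at hfx
          exact Finset.mem_filter.mpr ⟨Finset.mem_erase.mpr ⟨hxu, hxs⟩, hadj, hfx⟩
        exact le_trans (Finset.card_le_card hsub) hNcd
      · by_cases hb : G.Adj v u ∧ f u = c
        · -- u is a tiny neighbour of v with colour c
          have htu : degS G s u ≤ d :=
            htiny u (Finset.mem_erase.mpr ⟨huv, hu⟩) hb.1 hb.2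
          have hsub : (s.filter fun x => G.Adj u x ∧
                Function.update f v c x = Function.update f v c u)
              ⊆ s.filter fun x => G.Adj u x := by
            intro x hx
            rw [Finset.mem_filter] at hx
            exact Finset.mem_filter.mpr ⟨hx.1, hx.2.1⟩
          exact le_trans (Finset.card_le_card hsub) htu
        · -- u keeps its old defect
          have hsub : (s.filter fun x => G.Adj u x ∧
                Function.update f v c x = Function.update f v c u)
              ⊆ (s.erase v).filter fun x => G.Adj u x ∧ f x = f u := by
            intro x hx
            rw [Finset.mem_filter] at hx
            obtain ⟨hxs, hadj, hfx⟩ := hx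
            rw [Function.update_of_ne huv] at hfx
            by_cases hxv : x = v
            · subst hxv
              rw [Function.update_self] at hfx
              exact absurd ⟨hadj.symm, hfx.symm⟩ hb
            · rw [Function.update_of_ne hxv] at hfx
              exact Finset.mem_filter.mpr ⟨Finset.mem_erase.mpr ⟨hxv, hxs⟩, hadj, hfx⟩
          exact le_trans (Finset.card_le_card hsub) (hfdef u (Finset.mem_erase.mpr ⟨huv, hu⟩))
  · -- no reducible vertex: contradiction with mad
    exfalso
    push_neg at hred
    have hA : ∀ v ∈ s, k ≤ degS G s v := fun v hv => (hred v hv).1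
    have hAB : ∀ v ∈ s,
        k ≤ (s.filter fun u => G.Adj v u ∧ d + 1 ≤ degS G s u).card + degS G s v / (d + 1) :=
      fun v hv => (hred v hv).2
    have hmn := hsum_le s hs
    have hscard : 1 ≤ s.card := Finset.card_pos.mpr hs
    by_cases hdk : d < k
    · -- k > d : impossible
      have hsumk : s.card * k ≤ ∑ v ∈ s, degS G s v := by
        rw [← smul_eq_mul]
        exact Finset.card_nsmul_le_sum _ _ _ hA
      have h1 : ((s.card * k : ℕ) : ℝ) ≤ m * s.card := le_trans (by exact_mod_cast hsumk) hmn
      push_cast at h1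
      have hkr : (1:ℝ) ≤ (k:ℝ) := by exact_mod_cast hk
      have hdr : (1:ℝ) ≤ (d:ℝ) := by exact_mod_cast hd
      have hdkr : (d:ℝ) < (k:ℝ) := by exact_mod_cast hdk
      have hcr : (1:ℝ) ≤ (s.card:ℝ) := by exact_mod_cast hscard
      nlinarith [mul_pos (lt_of_lt_of_le zero_lt_one hkr) (lt_of_lt_of_le zero_lt_one hcr)]
    · push_neg at hdk  -- k ≤ d
      set B : Finset V := s.filter fun u => d + 1 ≤ degS G s u with hB
      set T : Finset V := s.filter fun u => ¬ (d + 1 ≤ degS G s u) with hT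
      have hTcard : ∀ v ∈ T, k ≤ (B.filter fun u => G.Adj v u).card := by
        intro v hv
        rw [Finset.mem_filter] at hv
        have hdiv : degS G s v / (d + 1) = 0 := Nat.div_eq_of_lt (by omega)
        have := hAB v hv.1
        rw [hdiv] at this
        have heq : (s.filter fun u => G.Adj v u ∧ d + 1 ≤ degS G s u)
            = B.filter fun u => G.Adj v u := by
          rw [hB, Finset.filter_filter]
          apply Finset.filter_congr
          intro x _
          tauto
        rw [heq] at this
        omega
      -- double counting
      have hswap : ∑ v ∈ T, (B.filter fun u => G.Adj v u).card
          = ∑ u ∈ B, (T.filter fun x => G.Adj x u).card := by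
        simp_rw [Finset.card_filter]
        exact Finset.sum_comm
      have hTs : T ⊆ s := Finset.filter_subset _ _
      have hBs : B ⊆ s := Finset.filter_subset _ _
      have hQ2 : T.card * k ≤ ∑ u ∈ B, degS G s u := by
        have h1 : T.card * k ≤ ∑ v ∈ T, (B.filter fun u => G.Adj v u).card := by
          have h0 := Finset.card_nsmul_le_sum T (fun v => (B.filter fun u => G.Adj v u).card) k hTcard
          simpa [smul_eq_mul] using h0
        have h2 : ∑ u ∈ B, (T.filter fun x => G.Adj x u).card ≤ ∑ u ∈ B, degS G s u := by
          apply Finset.sum_le_sum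
          intro u _
          show (T.filter fun x => G.Adj x u).card ≤ (s.filter fun x => G.Adj u x).card
          apply Finset.card_le_card
          intro x hx
          rw [Finset.mem_filter] at hx ⊢
          exact ⟨hTs hx.1, hx.2.symm⟩
        rw [hswap] at h1
        exact le_trans h1 h2
      have hQ1 : B.card * (d + 1) ≤ ∑ u ∈ B, degS G s u := by
        have h0 := Finset.card_nsmul_le_sum B (fun u => degS G s u) (d + 1)
          (fun u hu => (Finset.mem_filter.mp hu).2)
        simpa [smul_eq_mul] using h0
      have hP1 : T.card * k ≤ ∑ u ∈ T, degS G s u := by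
        have h0 := Finset.card_nsmul_le_sum T (fun u => degS G s u) k
          (fun u hu => hA u (hTs hu))
        simpa [smul_eq_mul] using h0
      have hBpos : 1 ≤ B.card := by
        obtain ⟨v0, hv0⟩ := hs
        by_cases hb : d + 1 ≤ degS G s v0
        · exact Finset.card_pos.mpr ⟨v0, Finset.mem_filter.mpr ⟨hv0, hb⟩⟩
        · have hv0T : v0 ∈ T := Finset.mem_filter.mpr ⟨hv0, hb⟩
          have := hTcard v0 hv0T
          have hle := Finset.card_le_card (Finset.filter_subset (fun u => G.Adj v0 u) B)
          omega
      have hsplit_sum : (∑ u ∈ B, degS G s u) + (∑ u ∈ T, degS G s u) = ∑ u ∈ s, degS G s u := by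
        rw [hB, hT]
        exact Finset.sum_filter_add_sum_filter_not s _ _
      have hsplit_card : B.card + T.card = s.card := by
        rw [hB, hT]
        exact Finset.card_filter_add_card_filter_not _
      -- pass to the reals
      set P : ℕ := ∑ u ∈ T, degS G s u with hPdef
      set Q : ℕ := ∑ u ∈ B, degS G s u with hQdef
      have hkr : (1:ℝ) ≤ (k:ℝ) := by exact_mod_cast hk
      have hdkr : (k:ℝ) ≤ (d:ℝ) := by exact_mod_cast hdk
      have hP1r : (T.card:ℝ) * k ≤ (P:ℝ) := by exact_mod_cast hP1
      have hQ1r : (B.card:ℝ) * ((d:ℝ)+1) ≤ (Q:ℝ) := by exact_mod_cast hQ1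
      have hQ2r : (T.card:ℝ) * k ≤ (Q:ℝ) := by exact_mod_cast hQ2
      have hBr : (1:ℝ) ≤ (B.card:ℝ) := by exact_mod_cast hBpos
      have hc1 : (P:ℝ) + (Q:ℝ) ≤ m * ((T.card:ℝ) + (B.card:ℝ)) := by
        have h0 : ((Q + P : ℕ):ℝ) ≤ m * ((B.card + T.card : ℕ):ℝ) := by
          rw [hsplit_sum, hsplit_card]
          exact hmn
        push_cast at h0
        linarith
      have hkd0 : (0:ℝ) ≤ (k:ℝ) + (d:ℝ) := by linarith
      have htb0 : (0:ℝ) ≤ (T.card:ℝ) + (B.card:ℝ) := by positivity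
      have e1 : ((P:ℝ) + Q) * ((k:ℝ) + d) ≤ m * ((T.card:ℝ) + B.card) * ((k:ℝ) + d) :=
        mul_le_mul_of_nonneg_right hc1 hkd0
      have e2 : m * ((k:ℝ) + d) * ((T.card:ℝ) + B.card)
          ≤ 2 * ((k:ℝ) * d) * ((T.card:ℝ) + B.card) :=
        mul_le_mul_of_nonneg_right hmkd htb0
      have hint1 : ((d:ℝ) - k) * ((Q:ℝ) - T.card * k) ≥ 0 :=
        mul_nonneg (by linarith) (by linarith)
      have hint2 : 2 * (k:ℝ) * ((Q:ℝ) - B.card * ((d:ℝ)+1)) ≥ 0 :=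
        mul_nonneg (by linarith) (by linarith)
      have hint3 : ((k:ℝ) + d) * ((P:ℝ) - T.card * k) ≥ 0 :=
        mul_nonneg (by linarith) (by linarith)
      have hint4 : (k:ℝ) * ((B.card:ℝ) - 1) ≥ 0 :=
        mul_nonneg (by linarith) (by linarith)
      nlinarith [e1, e2, hint1, hint2, hint3, hint4, hkr]

end Stmt11Aux
end Stmt11Aux
/-- **Lemma 29 (Havet).** For all real `m > 0` and integers `k, d ≥ 1` with
`1/k + 1/d ≤ 2/m`, every graph in which every subgraph has average degree at
most `m` (i.e. `mad(G) ≤ m`) is `k`-choosable with defect `d`. -/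
theorem stmt11 [Fintype V] (G : SimpleGraph V) (m : ℝ) (hm : 0 < m)
    (k d : ℕ) (hk : 1 ≤ k) (hd : 1 ≤ d)
    (hkd : (1 : ℝ) / k + 1 / d ≤ 2 / m)
    (hmad : ∀ H : G.Subgraph, H.verts.Nonempty →
      2 * (H.edgeSet.ncard : ℝ) ≤ m * H.verts.ncard) :
    ChoosableWithDefect G k d := by
  classical
  intro L hL
  have hk0 : (0:ℝ) < (k:ℝ) := by exact_mod_cast Nat.lt_of_lt_of_le Nat.zero_lt_one hk
  have hd0 : (0:ℝ) < (d:ℝ) := by exact_mod_cast Nat.lt_of_lt_of_le Nat.zero_lt_one hd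
  have hmkd : m * ((k:ℝ) + (d:ℝ)) ≤ 2 * ((k:ℝ) * (d:ℝ)) := by
    rw [div_add_div _ _ (ne_of_gt hk0) (ne_of_gt hd0),
      div_le_div_iff₀ (by positivity) hm] at hkd
    nlinarith [hkd]
  obtain ⟨f, h1, h2⟩ := Stmt11Aux.key G m hm k d hk hd hmkd hmad L hL
    (fun s hs => Stmt11Aux.sum_degS_le G m hmad s hs) Finset.univ
  refine ⟨f, h1, fun v => ?_⟩
  have hset : {u | G.Adj v u ∧ f u = f v}
      = ↑(Finset.univ.filter fun u => G.Adj v u ∧ f u = f v) := by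
    ext u; simp
  rw [hset, Set.ncard_coe_finset]
  exact h2 v (Finset.mem_univ v)
end

section
/- For every real m > 0, the defective chromatic number (and defective choice number) of the class of graphs with maximum average degree at most m equals ⌊m/2⌋ + 1. -/
open SimpleGraph

variable {V α : Type*}

/-- The defective chromatic number of the class `𝒢` is at most `k`. -/
def DefChromLE (𝒢 : GraphClass) (k : ℕ) : Prop :=
  ∃ d : ℕ, ∀ G, G ∈ 𝒢 → ∃ f : Fin G.1 → Fin k, HasDefect G.2 f d

/-- The defective choice number of the class `𝒢` is at most `k`. -/
def DefChoiceLE (𝒢 : GraphClass) (k : ℕ) : Prop :=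
  ∃ d : ℕ, ∀ G, G ∈ 𝒢 → ChoosableWithDefect G.2 k d

/-- `𝒜 m` is the class of graphs with maximum average degree at most `m`:
every subgraph `H` satisfies `2|E(H)| ≤ m·|V(H)|`. -/
def AClass (m : ℝ) : GraphClass :=
  {G | ∀ H : G.2.Subgraph, 2 * (H.edgeSet.ncard : ℝ) ≤ m * H.verts.ncard}

namespace HS28

variable {V α : Type*}



/-- Edges of `G` with both endpoints in `S`. -/
def edgesIn (G : SimpleGraph V) (S : Set V) : Set (Sym2 V) :=
  {e | e ∈ G.edgeSet ∧ ∀ x ∈ e, x ∈ S}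

/-- Every finite set of vertices spans at most `c` times its size many edges. -/
def Sparse (G : SimpleGraph V) (c : ℝ) : Prop :=
  ∀ S : Finset V, ((edgesIn G ↑S).ncard : ℝ) ≤ c * S.card

lemma mem_edgesIn (G : SimpleGraph V) (S : Set V) (a b : V) :
    s(a, b) ∈ edgesIn G S ↔ G.Adj a b ∧ a ∈ S ∧ b ∈ S := by
  simp only [edgesIn, Set.mem_setOf_eq, mem_edgeSet, Sym2.mem_iff]
  constructor
  · rintro ⟨h1, h2⟩
    exact ⟨h1, h2 a (Or.inl rfl), h2 b (Or.inr rfl)⟩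
  · rintro ⟨h1, h2, h3⟩
    refine ⟨h1, ?_⟩
    rintro x (rfl | rfl) <;> assumption

lemma sparse_of_subgraph_bound {G : SimpleGraph V} {m : ℝ}
    (hG : ∀ H : G.Subgraph, 2 * (H.edgeSet.ncard : ℝ) ≤ m * H.verts.ncard) :
    Sparse G (m / 2) := by
  intro S
  set H : G.Subgraph :=
    { verts := ↑S
      Adj := fun a b => a ∈ S ∧ b ∈ S ∧ G.Adj a b
      adj_sub := fun h => h.2.2
      edge_vert := fun h => h.1
      symm := ⟨fun a b h => ⟨h.2.1, h.1, h.2.2.symm⟩⟩ } with hH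
  have hedge : H.edgeSet = edgesIn G ↑S := by
    ext e
    induction e using Sym2.ind with
    | _ a b =>
      rw [Subgraph.mem_edgeSet, mem_edgesIn]
      constructor
      · rintro ⟨h1, h2, h3⟩; exact ⟨h3, h1, h2⟩
      · rintro ⟨h1, h2, h3⟩; exact ⟨h2, h3, h1⟩
  have hv : H.verts.ncard = S.card := by
    rw [hH]; exact Set.ncard_coe_finset S
  have := hG H
  rw [hedge, hv] at this
  linarith

lemma edgesIn_ncard_le {G : SimpleGraph V} [Fintype V] [DecidableEq V]
    (N : V → Finset V) (h : ℕ)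
    (hcov : ∀ a b, G.Adj a b → b ∈ N a ∨ a ∈ N b) (hsize : ∀ a, (N a).card ≤ h)
    (E : Set (Sym2 V)) (T : Finset V)
    (hE : ∀ a b, s(a,b) ∈ E → G.Adj a b ∧ a ∈ T ∧ b ∈ T) :
    E.ncard ≤ h * T.card := by
  classical
  have hsub : E ⊆ ↑(T.biUnion (fun x => (N x).image (fun w => s(x, w)))) := by
    intro e he
    induction e using Sym2.ind with
    | _ a b =>
      obtain ⟨hab, haT, hbT⟩ := hE a b he
      simp only [Finset.coe_biUnion, Set.mem_iUnion, Finset.mem_coe,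
        Finset.mem_image]
      rcases hcov a b hab with hc | hc
      · exact ⟨a, haT, b, hc, rfl⟩
      · exact ⟨b, hbT, a, hc, Sym2.eq_swap⟩
  calc E.ncard ≤ (↑(T.biUnion (fun x => (N x).image (fun w => s(x, w)))) : Set (Sym2 V)).ncard :=
        Set.ncard_le_ncard hsub (Set.toFinite _)
    _ = (T.biUnion (fun x => (N x).image (fun w => s(x, w)))).card := Set.ncard_coe_finset _
    _ ≤ ∑ x ∈ T, ((N x).image (fun w => s(x, w))).card := Finset.card_biUnion_le
    _ ≤ ∑ _x ∈ T, h := by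
        refine Finset.sum_le_sum fun x _ => ?_
        exact le_trans (Finset.card_image_le) (hsize x)
    _ = h * T.card := by rw [Finset.sum_const, smul_eq_mul, mul_comm]

/-- If `G` has an "orientation" with out-sets of size at most `h`, then it is in
`AClass m` for any `m ≥ 2h`. -/
lemma subgraph_bound_of_N {G : SimpleGraph V} [Fintype V] [DecidableEq V]
    (N : V → Finset V) (h : ℕ)
    (hcov : ∀ a b, G.Adj a b → b ∈ N a ∨ a ∈ N b) (hsize : ∀ a, (N a).card ≤ h)
    {m : ℝ} (hm : 2 * (h : ℝ) ≤ m) :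
    ∀ H : G.Subgraph, 2 * (H.edgeSet.ncard : ℝ) ≤ m * H.verts.ncard := by
  classical
  intro H
  have hT := (H.verts.toFinite).toFinset
  have key : H.edgeSet.ncard ≤ h * (H.verts.toFinite).toFinset.card := by
    apply edgesIn_ncard_le N h hcov hsize
    intro a b hab
    rw [Subgraph.mem_edgeSet] at hab
    refine ⟨hab.adj_sub, ?_, ?_⟩
    · simpa using H.edge_vert hab
    · simpa using H.edge_vert hab.symm
  have hv : ((H.verts.toFinite).toFinset.card : ℝ) = H.verts.ncard := by
    rw [Set.Finite.card_toFinset, Set.ncard_eq_toFinset_card']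
    simp
  have h1 : (H.edgeSet.ncard : ℝ) ≤ (h : ℝ) * H.verts.ncard := by
    rw [← hv]
    exact_mod_cast key
  have h2 : (0:ℝ) ≤ H.verts.ncard := by positivity
  nlinarith




lemma count {V : Type*} [Fintype V] (G : SimpleGraph V) [DecidableRel G.Adj]
    (k D : ℕ) (hk : 1 ≤ k) (ε : ℝ) (hε : 0 < ε) (hεk : ε ≤ (k : ℝ))
    (hD : 2 * (k : ℝ) * ((k : ℝ) - ε) < ε * ((D : ℝ) + 1))
    (hsp : (G.edgeFinset.card : ℝ) ≤ ((k : ℝ) - ε) * Fintype.card V)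
    (hbig : ∀ v : V, G.degree v ≤ D →
      k ≤ (Finset.univ.filter (fun w => G.Adj v w ∧ D + 1 ≤ G.degree w)).card)
    (hne : Nonempty V) : False := by
  classical
  set S : Finset V := Finset.univ.filter (fun v => G.degree v ≤ D) with hS
  set B : Finset V := Finset.univ.filter (fun v => ¬ G.degree v ≤ D) with hB
  have hcardVB : S.card + B.card = Fintype.card V := by
    rw [hS, hB, Finset.card_filter_add_card_filter_not]
    rfl
  -- (ii) : (D+1) * |B| ≤ 2 * E
  have hii : (D + 1) * B.card ≤ 2 * G.edgeFinset.card := by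
    calc (D + 1) * B.card = ∑ _v ∈ B, (D + 1) := by
          rw [Finset.sum_const, smul_eq_mul, mul_comm]
      _ ≤ ∑ v ∈ B, G.degree v := by
          refine Finset.sum_le_sum fun v hv => ?_
          rw [hB, Finset.mem_filter] at hv
          omega
      _ ≤ ∑ v : V, G.degree v := Finset.sum_le_sum_of_subset (Finset.filter_subset _ _)
      _ = 2 * G.edgeFinset.card := G.sum_degrees_eq_twice_card_edges
  -- (iii) : k * |S| ≤ E
  have hiii : k * S.card ≤ G.edgeFinset.card := by
    set T : Finset (Sym2 V) := S.biUnion (fun v =>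
      (Finset.univ.filter (fun w => G.Adj v w ∧ D + 1 ≤ G.degree w)).image
        (fun w => s(v, w))) with hT
    have hTsub : T ⊆ G.edgeFinset := by
      intro e he
      rw [hT, Finset.mem_biUnion] at he
      obtain ⟨v, -, he⟩ := he
      rw [Finset.mem_image] at he
      obtain ⟨w, hw, rfl⟩ := he
      rw [Finset.mem_filter] at hw
      rw [mem_edgeFinset, mem_edgeSet]
      exact hw.2.1
    have hTcard : T.card = ∑ v ∈ S, ((Finset.univ.filter
        (fun w => G.Adj v w ∧ D + 1 ≤ G.degree w)).image (fun w => s(v, w))).card := by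
      refine Finset.card_biUnion ?_
      intro x hx y hy hxy
      unfold Function.onFun
      rw [Finset.disjoint_left]
      intro e hex hey
      rw [Finset.mem_image] at hex hey
      obtain ⟨w, hw, hew⟩ := hex
      obtain ⟨w', hw', hew'⟩ := hey
      rw [Finset.mem_filter] at hw hw'
      rw [hS, Finset.mem_coe, Finset.mem_filter] at hx hy
      rw [← hew', Sym2.eq_iff] at hew
      rcases hew with ⟨h1, -⟩ | ⟨h1, h2⟩
      · exact hxy h1
      · -- x = w' is big but x is small
        have := hw'.2.2
        rw [← h1] at this
        omega
    have hTge : ∑ v ∈ S, k ≤ T.card := by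
      rw [hTcard]
      refine Finset.sum_le_sum fun v hv => ?_
      rw [hS, Finset.mem_filter] at hv
      have hinj : Set.InjOn (fun w => s(v, w))
          ↑(Finset.univ.filter (fun w => G.Adj v w ∧ D + 1 ≤ G.degree w)) := by
        intro a _ b _ hab
        simp only [Sym2.eq_iff] at hab
        rcases hab with ⟨-, h⟩ | ⟨h1, h2⟩
        · exact h
        · rw [← h1, h2]
      rw [Finset.card_image_of_injOn hinj]
      exact hbig v hv.2
    calc k * S.card = ∑ _v ∈ S, k := by rw [Finset.sum_const, smul_eq_mul, mul_comm]
      _ ≤ T.card := hTge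
      _ ≤ G.edgeFinset.card := Finset.card_le_card hTsub
  -- combine over the reals to show B = ∅
  have hB0 : B.card = 0 := by
    by_contra hB1
    have hb1 : (1 : ℝ) ≤ B.card := by exact_mod_cast Nat.one_le_iff_ne_zero.mpr hB1
    have h1 : (k : ℝ) * S.card ≤ G.edgeFinset.card := by exact_mod_cast hiii
    have h2 : ((D : ℝ) + 1) * B.card ≤ 2 * G.edgeFinset.card := by exact_mod_cast hii
    have h3 : (S.card : ℝ) + B.card = Fintype.card V := by exact_mod_cast hcardVB
    have hs0 : (0 : ℝ) ≤ S.card := Nat.cast_nonneg _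
    have hk1 : (1 : ℝ) ≤ k := by exact_mod_cast hk
    rw [← h3] at hsp
    nlinarith [mul_le_mul_of_nonneg_left h1 (by linarith : (0:ℝ) ≤ 2 * (k:ℝ) - ε),
      mul_le_mul_of_nonneg_left h2 (le_of_lt hε),
      mul_le_mul_of_nonneg_left hsp (by linarith : (0:ℝ) ≤ 2 * (k:ℝ))]
  -- now every vertex is small, and small vertices need k big neighbours
  obtain ⟨v⟩ := hne
  have hvS : G.degree v ≤ D := by
    by_contra hvB
    have : v ∈ B := by rw [hB, Finset.mem_filter]; exact ⟨Finset.mem_univ v, hvB⟩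
    rw [Finset.card_eq_zero.mp hB0] at this
    exact absurd this (Finset.notMem_empty v)
  have hle := hbig v hvS
  have hsub : (Finset.univ.filter (fun w => G.Adj v w ∧ D + 1 ≤ G.degree w)) ⊆ B := by
    intro w hw
    rw [Finset.mem_filter] at hw
    rw [hB, Finset.mem_filter]
    exact ⟨Finset.mem_univ w, by omega⟩
  have := Finset.card_le_card hsub
  omega



lemma ncard_neighborSet {V : Type*} [Fintype V] (G : SimpleGraph V) [DecidableRel G.Adj]
    (v : V) : (G.neighborSet v).ncard = G.degree v := by
  have h1 : G.degree v = (G.neighborFinset v).card := rfl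
  rw [h1, ← Set.ncard_coe_finset (G.neighborFinset v), neighborFinset_def, Set.coe_toFinset]

lemma mono_le_degree {V : Type*} [Fintype V] (G : SimpleGraph V) [DecidableRel G.Adj]
    (f : V → ℕ) (u : V) : {w | G.Adj u w ∧ f w = f u}.ncard ≤ G.degree u := by
  rw [← ncard_neighborSet G u]
  refine Set.ncard_le_ncard ?_ (Set.toFinite _)
  intro w hw
  exact hw.1

lemma upper (k D : ℕ) (hk : 1 ≤ k) (ε : ℝ) (hε : 0 < ε) (hεk : ε ≤ (k : ℝ))
    (hD : 2 * (k : ℝ) * ((k : ℝ) - ε) < ε * ((D : ℝ) + 1)) :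
    ∀ (n : ℕ) (V : Type) (_ : Fintype V) (G : SimpleGraph V), Fintype.card V = n →
      Sparse G ((k : ℝ) - ε) →
      ∀ L : V → Finset ℕ, (∀ v, k ≤ (L v).card) →
      ∃ f : V → ℕ, (∀ v, f v ∈ L v) ∧ ∀ v, {u | G.Adj v u ∧ f u = f v}.ncard ≤ D := by
  intro n
  induction n using Nat.strong_induction_on with
  | _ n IH =>
    intro V instV G hcard hsp L hL
    classical
    rcases isEmpty_or_nonempty V with hemp | hne
    · exact ⟨fun v => (IsEmpty.false v).elim, fun v => (IsEmpty.false v).elim,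
        fun v => (IsEmpty.false v).elim⟩
    -- find a small vertex with few big neighbours
    have hEcard : (G.edgeFinset.card : ℝ) ≤ ((k : ℝ) - ε) * Fintype.card V := by
      have := hsp Finset.univ
      have huniv : edgesIn G ↑(Finset.univ : Finset V) = G.edgeSet := by
        ext e
        simp [edgesIn]
      rw [huniv] at this
      have hE : G.edgeSet.ncard = G.edgeFinset.card := by
        rw [← coe_edgeFinset, Set.ncard_coe_finset]
      rw [hE] at this
      simpa using this
    have hex : ∃ v : V, G.degree v ≤ D ∧
        (Finset.univ.filter (fun w => G.Adj v w ∧ D + 1 ≤ G.degree w)).card < k := by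
      by_contra hall
      push_neg at hall
      exact count G k D hk ε hε hεk hD hEcard (fun v hv => hall v hv) hne
    obtain ⟨v, hvdeg, hvfew⟩ := hex
    set BN : Finset V := Finset.univ.filter (fun w => G.Adj v w ∧ D + 1 ≤ G.degree w) with hBN
    -- the graph without v
    set V' : Type := {u : V // u ≠ v} with hV'
    set G' : SimpleGraph V' := G.comap Subtype.val with hG'
    have hcard' : Fintype.card V' < n := by
      rw [← hcard]
      exact Fintype.card_subtype_lt (x := v) (by simp)
    have hsp' : Sparse G' ((k : ℝ) - ε) := by
      intro S'
      have hinj2 : Function.Injective (Sym2.map (Subtype.val : V' → V)) :=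
        Sym2.map.injective Subtype.val_injective
      have hsub : Sym2.map Subtype.val '' edgesIn G' ↑S' ⊆
          edgesIn G ↑(S'.image Subtype.val) := by
        rintro e ⟨e', he', rfl⟩
        induction e' using Sym2.ind with
        | _ a b =>
          rw [mem_edgesIn] at he'
          rw [Sym2.map_pair_eq, mem_edgesIn]
          refine ⟨he'.1, ?_, ?_⟩
          · exact Finset.mem_coe.mpr (Finset.mem_image_of_mem _ (Finset.mem_coe.mp he'.2.1))
          · exact Finset.mem_coe.mpr (Finset.mem_image_of_mem _ (Finset.mem_coe.mp he'.2.2))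
      calc ((edgesIn G' ↑S').ncard : ℝ)
          = ((Sym2.map Subtype.val '' edgesIn G' ↑S').ncard : ℝ) := by
            rw [Set.ncard_image_of_injective _ hinj2]
        _ ≤ ((edgesIn G ↑(S'.image Subtype.val)).ncard : ℝ) := by
            exact_mod_cast Set.ncard_le_ncard hsub (Set.toFinite _)
        _ ≤ ((k : ℝ) - ε) * (S'.image Subtype.val).card := hsp _
        _ = ((k : ℝ) - ε) * S'.card := by
            rw [Finset.card_image_of_injective _ Subtype.val_injective]
    obtain ⟨f', hf'mem, hf'def⟩ := IH _ hcard' V' inferInstance G' rfl hsp'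
      (fun u => L u.val) (fun u => hL u.val)
    -- choose a colour for v avoiding colours of big neighbours
    have hBNadj : ∀ w ∈ BN, w ≠ v := by
      intro w hw
      rw [hBN, Finset.mem_filter] at hw
      exact fun h => G.loopless.irrefl v (h ▸ hw.2.1)
    set img : Finset ℕ := BN.attach.image
      (fun w => f' ⟨w.1, hBNadj w.1 w.2⟩) with himg
    have himgcard : img.card < k := by
      calc img.card ≤ BN.attach.card := Finset.card_image_le
        _ = BN.card := Finset.card_attach
        _ < k := hvfew
    have hc0 : ∃ c0, c0 ∈ L v \ img := by
      have h1 : (L v).card - img.card ≤ (L v \ img).card := Finset.le_card_sdiff _ _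
      have h2 := hL v
      have : 0 < (L v \ img).card := by omega
      obtain ⟨c0, hc0⟩ := Finset.card_pos.mp this
      exact ⟨c0, hc0⟩
    obtain ⟨c0, hc0⟩ := hc0
    rw [Finset.mem_sdiff] at hc0
    -- the extended colouring
    set f : V → ℕ := fun u => if h : u = v then c0 else f' ⟨u, h⟩ with hf
    have hfv : f v = c0 := by rw [hf]; simp
    have hfne : ∀ (u : V) (h : u ≠ v), f u = f' ⟨u, h⟩ := by
      intro u h; rw [hf]; simp [h]
    refine ⟨f, ?_, ?_⟩
    · intro u
      by_cases h : u = v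
      · rw [h, hfv]; exact hc0.1
      · rw [hfne u h]; exact hf'mem ⟨u, h⟩
    · intro u
      by_cases h : u = v
      · subst h
        exact le_trans (mono_le_degree G f u) hvdeg
      · by_cases hdeg : G.degree u ≤ D
        · exact le_trans (mono_le_degree G f u) hdeg
        · -- u is big; v is not in its monochromatic set
          have hvnot : v ∉ {w | G.Adj u w ∧ f w = f u} := by
            intro hv'
            obtain ⟨hadj, hcol⟩ := hv'
            have huBN : u ∈ BN := by
              rw [hBN, Finset.mem_filter]
              exact ⟨Finset.mem_univ u, hadj.symm, by omega⟩
            have : f u ∈ img := by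
              rw [himg, Finset.mem_image]
              exact ⟨⟨u, huBN⟩, Finset.mem_attach _ _, (hfne u h).symm⟩
            rw [← hcol, hfv] at this
            exact hc0.2 this
          have hset : {w | G.Adj u w ∧ f w = f u} =
              Subtype.val '' {w' : V' | G'.Adj ⟨u, h⟩ w' ∧ f' w' = f' ⟨u, h⟩} := by
            ext w
            constructor
            · intro hw
              have hwv : w ≠ v := fun hwv => hvnot (hwv ▸ hw)
              refine ⟨⟨w, hwv⟩, ⟨?_, ?_⟩, rfl⟩
              · exact hw.1
              · rw [← hfne w hwv, ← hfne u h]; exact hw.2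
            · rintro ⟨⟨w, hwv⟩, ⟨hadj, hcol⟩, rfl⟩
              refine ⟨hadj, ?_⟩
              rw [hfne w hwv, hfne u h]; exact hcol
          rw [hset, Set.ncard_image_of_injective _ Subtype.val_injective]
          exact hf'def ⟨u, h⟩



/-- Vertex type of the standard example `S(h,d)`. -/
def Vh (d : ℕ) : ℕ → Type
  | 0 => Unit
  | h + 1 => Option (Fin (d + 1) × Vh d h)

instance vhDecEq (d : ℕ) : ∀ h, DecidableEq (Vh d h)
  | 0 => (inferInstance : DecidableEq Unit)
  | h + 1 => letI := vhDecEq d h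
      (inferInstance : DecidableEq (Option (Fin (d + 1) × Vh d h)))

instance vhFintype (d : ℕ) : ∀ h, Fintype (Vh d h)
  | 0 => (inferInstance : Fintype Unit)
  | h + 1 => letI := vhFintype d h
      (inferInstance : Fintype (Option (Fin (d + 1) × Vh d h)))

/-- The standard example `S(h,d)`: a root joined to all vertices of `d+1`
copies of `S(h-1,d)`. -/
def Gh (d : ℕ) : (h : ℕ) → SimpleGraph (Vh d h)
  | 0 => ⊥
  | h + 1 =>
    { Adj := fun x y =>
        match x, y with
        | none, none => False
        | none, some _ => True
        | some _, none => True
        | some (i, u), some (j, w) => i = j ∧ (Gh d h).Adj u w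
      symm := by
        refine ⟨?_⟩
        rintro (_ | ⟨i, u⟩) (_ | ⟨j, w⟩) hxy <;> try trivial
        exact ⟨hxy.1.symm, hxy.2.symm⟩
      loopless := by
        refine ⟨?_⟩
        rintro (_ | ⟨i, u⟩) hxy
        · exact hxy
        · exact (Gh d h).loopless.irrefl u hxy.2 }

/-- The root of `S(h,d)`. -/
def rootVh (d : ℕ) : (h : ℕ) → Vh d h
  | 0 => ()
  | _ + 1 => none

/-- Out-neighbourhoods witnessing that `S(h,d)` has all local densities at most `h`. -/
def Nh (d : ℕ) : (h : ℕ) → Vh d h → Finset (Vh d h)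
  | 0, _ => ∅
  | h + 1, x =>
    match x with
    | none => ∅
    | some (i, u) =>
      letI := vhDecEq d (h+1)
      insert (none : Vh d (h+1)) ((Nh d h u).image (fun w => (some (i, w) : Vh d (h+1))))

lemma Nh_card (d : ℕ) : ∀ h (x : Vh d h), (Nh d h x).card ≤ h
  | 0, _ => le_refl 0
  | h + 1, x => by
    match x with
    | none => simp [Nh]
    | some (i, u) =>
      classical
      calc (Nh d (h+1) (some (i,u))).card
          ≤ ((Nh d h u).image (fun w => (some (i, w) : Vh d (h+1)))).card + 1 :=
            Finset.card_insert_le _ _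
        _ ≤ (Nh d h u).card + 1 := by
            exact Nat.add_le_add_right Finset.card_image_le 1
        _ ≤ h + 1 := Nat.add_le_add_right (Nh_card d h u) 1

lemma Nh_cov (d : ℕ) : ∀ h (a b : Vh d h), (Gh d h).Adj a b → b ∈ Nh d h a ∨ a ∈ Nh d h b
  | 0, a, b, hab => absurd hab (by simp [Gh])
  | h + 1, a, b, hab => by
    classical
    match a, b, hab with
    | none, some (j, w), _ => exact Or.inr (Finset.mem_insert_self _ _)
    | some (i, u), none, _ => exact Or.inl (Finset.mem_insert_self _ _)
    | some (i, u), some (j, w), hab =>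
      obtain ⟨rfl, huw⟩ := hab
      rcases Nh_cov d h u w huw with hc | hc
      · exact Or.inl (Finset.mem_insert_of_mem (Finset.mem_image_of_mem _ hc))
      · exact Or.inr (Finset.mem_insert_of_mem (Finset.mem_image_of_mem _ hc))

lemma mono_copy_le {d h : ℕ} (f : Vh d (h+1) → ℕ) (i : Fin (d+1)) (v : Vh d h) :
    {u | (Gh d h).Adj v u ∧ f (some (i,u)) = f (some (i,v))}.ncard ≤
      {u | (Gh d (h+1)).Adj (some (i,v)) u ∧ f u = f (some (i,v))}.ncard := by
  have hinj : Function.Injective (fun u : Vh d h => (some (i, u) : Vh d (h+1))) := by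
    intro a b hab
    simpa using hab
  rw [← Set.ncard_image_of_injective _ hinj]
  apply Set.ncard_le_ncard _ (Set.toFinite _)
  rintro x ⟨u, ⟨hadj, hcol⟩, rfl⟩
  exact ⟨⟨rfl, hadj⟩, hcol⟩

lemma Pstrong (d : ℕ) : ∀ (h : ℕ) (f : Vh d h → ℕ) (C : Finset ℕ),
    (∀ v, f v ∈ C) → C.card ≤ h →
    (∀ v : Vh d h, v ≠ rootVh d h → {u | (Gh d h).Adj v u ∧ f u = f v}.ncard ≤ d) →
    d + 1 ≤ {u | (Gh d h).Adj (rootVh d h) u ∧ f u = f (rootVh d h)}.ncard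
  | 0, f, C, hfC, hC, _ => by
    have : C = ∅ := Finset.card_eq_zero.mp (Nat.le_zero.mp hC)
    exact absurd (hfC (rootVh d 0)) (by simp [this])
  | h + 1, f, C, hfC, hC, hdef => by
    classical
    have hcopy : ∀ i : Fin (d+1), ∃ v : Vh d h, f (some (i, v)) = f (rootVh d (h+1)) := by
      intro i
      set fi : Vh d h → ℕ := fun v => f (some (i, v)) with hfi
      set Ci : Finset ℕ := Finset.image fi Finset.univ with hCi
      have hCisub : Ci ⊆ C := by
        intro c hc
        rw [hCi, Finset.mem_image] at hc
        obtain ⟨v, -, rfl⟩ := hc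
        exact hfC _
      have hdef' : ∀ v : Vh d h, {u | (Gh d h).Adj v u ∧ fi u = fi v}.ncard ≤ d := by
        intro v
        exact le_trans (mono_copy_le f i v) (hdef (some (i, v)) (by simp [rootVh]; exact Option.some_ne_none _))
      have hCcard : h + 1 ≤ Ci.card := by
        by_contra hlt
        push_neg at hlt
        have := Pstrong d h fi Ci (fun v => Finset.mem_image_of_mem fi (Finset.mem_univ v))
          (Nat.lt_succ_iff.mp hlt) (fun v _ => hdef' v)
        exact absurd this (by have := hdef' (rootVh d h); omega)
      have hCeq : Ci = C := Finset.eq_of_subset_of_card_le hCisub (le_trans hC hCcard)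
      have : f (rootVh d (h+1)) ∈ Ci := hCeq ▸ hfC _
      rw [hCi, Finset.mem_image] at this
      obtain ⟨v, -, hv⟩ := this
      exact ⟨v, hv⟩
    choose vv hvv using hcopy
    have hinj : Function.Injective (fun i : Fin (d+1) => (some (i, vv i) : Vh d (h+1))) := by
      intro a b hab
      have := Option.some_injective _ hab
      exact (Prod.ext_iff.mp this).1
    have hsub : (fun i : Fin (d+1) => (some (i, vv i) : Vh d (h+1))) '' Set.univ ⊆
        {u | (Gh d (h+1)).Adj (rootVh d (h+1)) u ∧ f u = f (rootVh d (h+1))} := by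
      rintro x ⟨i, -, rfl⟩
      exact ⟨trivial, hvv i⟩
    calc d + 1 = (Set.univ : Set (Fin (d+1))).ncard := by rw [Set.ncard_univ, Nat.card_eq_fintype_card, Fintype.card_fin]
      _ = ((fun i : Fin (d+1) => (some (i, vv i) : Vh d (h+1))) '' Set.univ).ncard :=
          (Set.ncard_image_of_injective _ hinj).symm
      _ ≤ _ := Set.ncard_le_ncard hsub (Set.toFinite _)

lemma noCol (d h : ℕ) (f : Vh d h → ℕ) (C : Finset ℕ) (hfC : ∀ v, f v ∈ C)
    (hC : C.card ≤ h) (hdef : ∀ v, {u | (Gh d h).Adj v u ∧ f u = f v}.ncard ≤ d) : False := by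
  have h1 := Pstrong d h f C hfC hC (fun v _ => hdef v)
  have h2 := hdef (rootVh d h)
  omega


lemma choice_to_chrom (𝒢 : GraphClass) (k : ℕ) (h : DefChoiceLE 𝒢 k) : DefChromLE 𝒢 k := by
  obtain ⟨d, hd⟩ := h
  refine ⟨d, fun G hG => ?_⟩
  obtain ⟨f, hfmem, hfdef⟩ := hd G hG (fun _ => Finset.range k) (fun _ => by simp)
  set g : Fin G.1 → Fin k := fun v => ⟨f v, Finset.mem_range.mp (hfmem v)⟩ with hg
  have hgf : ∀ u w, g u = g w ↔ f u = f w := by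
    intro u w
    simp [hg, Fin.ext_iff]
  refine ⟨g, fun v => ?_⟩
  simpa only [hgf] using hfdef v

lemma upper_main (m : ℝ) (hm : 0 < m) : DefChoiceLE (AClass m) (⌊m / 2⌋₊ + 1) := by
  set k : ℕ := ⌊m / 2⌋₊ + 1 with hkdef
  set ε : ℝ := (k : ℝ) - m / 2 with hεdef
  have hm2 : (0 : ℝ) ≤ m / 2 := by linarith
  have hε : 0 < ε := by
    have := Nat.lt_floor_add_one (m / 2)
    rw [hεdef, hkdef]
    push_cast
    linarith
  have hεk : ε ≤ (k : ℝ) := by rw [hεdef]; linarith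
  have hkε : (k : ℝ) - ε = m / 2 := by rw [hεdef]; ring
  set D : ℕ := ⌈2 * (k : ℝ) * ((k : ℝ) - ε) / ε⌉₊ + 1 with hDdef
  have hD : 2 * (k : ℝ) * ((k : ℝ) - ε) < ε * ((D : ℝ) + 1) := by
    have h1 : 2 * (k : ℝ) * ((k : ℝ) - ε) / ε ≤ (⌈2 * (k : ℝ) * ((k : ℝ) - ε) / ε⌉₊ : ℝ) :=
      Nat.le_ceil _
    have h2 : ((⌈2 * (k : ℝ) * ((k : ℝ) - ε) / ε⌉₊ : ℝ)) < (D : ℝ) + 1 := by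
      rw [hDdef]
      push_cast
      linarith
    have h3 : 2 * (k : ℝ) * ((k : ℝ) - ε) / ε < (D : ℝ) + 1 := lt_of_le_of_lt h1 h2
    calc 2 * (k : ℝ) * ((k : ℝ) - ε) = (2 * (k : ℝ) * ((k : ℝ) - ε) / ε) * ε := by
          field_simp
      _ < ((D : ℝ) + 1) * ε := by
          apply mul_lt_mul_of_pos_right h3 hε
      _ = ε * ((D : ℝ) + 1) := by ring
  refine ⟨D, fun G hG => ?_⟩
  intro L hL
  have hsp : Sparse G.2 ((k : ℝ) - ε) := by
    rw [hkε]
    exact sparse_of_subgraph_bound hG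
  obtain ⟨f, hf1, hf2⟩ := upper k D (Nat.le_add_left 1 _) ε hε hεk hD
    (Fintype.card (Fin G.1)) (Fin G.1) inferInstance G.2 rfl hsp L hL
  exact ⟨f, hf1, hf2⟩

/-- The standard example, transported to `Fin n`. -/
noncomputable def exN (d h : ℕ) : ℕ := Fintype.card (Vh d h)

noncomputable def exEquiv (d h : ℕ) : Vh d h ≃ Fin (exN d h) := Fintype.equivFin _

noncomputable def exG (d h : ℕ) : SimpleGraph (Fin (exN d h)) :=
  (Gh d h).comap (exEquiv d h).symm

lemma exG_mem (d h : ℕ) (m : ℝ) (hm2 : 2 * (h : ℝ) ≤ m) :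
    (⟨exN d h, exG d h⟩ : Σ n : ℕ, SimpleGraph (Fin n)) ∈ AClass m := by
  classical
  set e := exEquiv d h
  intro H
  refine subgraph_bound_of_N (fun x => (Nh d h (e.symm x)).image e) h ?_ ?_ hm2 H
  · intro a b hab
    have hab' : (Gh d h).Adj (e.symm a) (e.symm b) := hab
    rcases Nh_cov d h _ _ hab' with hc | hc
    · left
      have : e (e.symm b) ∈ (Nh d h (e.symm a)).image e := Finset.mem_image_of_mem _ hc
      rwa [e.apply_symm_apply] at this
    · right
      have : e (e.symm a) ∈ (Nh d h (e.symm b)).image e := Finset.mem_image_of_mem _ hc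
      rwa [e.apply_symm_apply] at this
  · intro a
    exact le_trans Finset.card_image_le (Nh_card d h _)

lemma exG_noCol (d h : ℕ) (f : Fin (exN d h) → ℕ) (hmem : ∀ x, f x ∈ Finset.range h)
    (hdef : HasDefect (exG d h) f d) : False := by
  set e := exEquiv d h
  set F : Vh d h → ℕ := fun v => f (e v) with hF
  refine noCol d h F (Finset.range h) (fun v => hmem (e v)) (by simp) ?_
  intro v
  have hset : {u | (Gh d h).Adj v u ∧ F u = F v} =
      e.symm '' {x | (exG d h).Adj (e v) x ∧ f x = f (e v)} := by
    ext u
    simp only [Set.mem_setOf_eq, Set.mem_image]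
    constructor
    · rintro ⟨h1, h2⟩
      refine ⟨e u, ⟨?_, h2⟩, e.symm_apply_apply u⟩
      show (Gh d h).Adj (e.symm (e v)) (e.symm (e u))
      rwa [e.symm_apply_apply, e.symm_apply_apply]
    · rintro ⟨x, ⟨h1, h2⟩, rfl⟩
      have h1' : (Gh d h).Adj (e.symm (e v)) (e.symm x) := h1
      rw [e.symm_apply_apply] at h1'
      refine ⟨h1', ?_⟩
      show f (e (e.symm x)) = F v
      rw [e.apply_symm_apply]
      exact h2
  rw [hset, Set.ncard_image_of_injective _ e.symm.injective]
  exact hdef (e v)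

lemma floor_two_le (m : ℝ) (hm : 0 < m) : 2 * ((⌊m / 2⌋₊ : ℕ) : ℝ) ≤ m := by
  have := Nat.floor_le (by linarith : (0:ℝ) ≤ m / 2)
  linarith

lemma lower_chrom (m : ℝ) (hm : 0 < m) : ¬ DefChromLE (AClass m) ⌊m / 2⌋₊ := by
  rintro ⟨d, hd⟩
  set h : ℕ := ⌊m / 2⌋₊
  obtain ⟨f, hfdef⟩ := hd ⟨exN d h, exG d h⟩ (exG_mem d h m (floor_two_le m hm))
  refine exG_noCol d h (fun x => (f x).val)
    (fun x => Finset.mem_range.mpr (f x).isLt) ?_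
  intro v
  have hiff : ∀ u w : Fin (exN d h), (f u).val = (f w).val ↔ f u = f w := by
    intro u w
    exact Fin.val_eq_val _ _
  simpa only [hiff] using hfdef v

lemma lower_choice (m : ℝ) (hm : 0 < m) : ¬ DefChoiceLE (AClass m) ⌊m / 2⌋₊ := by
  rintro ⟨d, hd⟩
  set h : ℕ := ⌊m / 2⌋₊
  obtain ⟨f, hfmem, hfdef⟩ := hd ⟨exN d h, exG d h⟩ (exG_mem d h m (floor_two_le m hm))
    (fun _ => Finset.range h) (fun _ => by simp)
  exact exG_noCol d h f hfmem hfdef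


end HS28

/-- **Theorem 28 (Havet–Sereni).** For every real `m > 0`, the defective
chromatic number and the defective choice number of the class of graphs with
maximum average degree at most `m` both equal `⌊m/2⌋ + 1`. -/
theorem stmt12 (m : ℝ) (hm : 0 < m) :
    (DefChromLE (AClass m) (⌊m / 2⌋₊ + 1) ∧ ¬ DefChromLE (AClass m) ⌊m / 2⌋₊) ∧
    (DefChoiceLE (AClass m) (⌊m / 2⌋₊ + 1) ∧ ¬ DefChoiceLE (AClass m) ⌊m / 2⌋₊) := by
  have hchoice := HS28.upper_main m hm
  exact ⟨⟨HS28.choice_to_chrom _ _ hchoice, HS28.lower_chrom m hm⟩,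
    ⟨hchoice, HS28.lower_choice m hm⟩⟩
end

section
/- For s ≥ 1 and d ≥ 0, if t = (ds+1)·s^s, then the complete bipartite graph K_{s,t} is not s-choosable with defect d: there is an assignment of lists of size s to the vertices of K_{s,t} such that every colouring from the lists has a vertex with more than d same-coloured neighbours. -/
open SimpleGraph

variable {V α : Type*}

private lemma decode_eq {s : ℕ} (hs : 0 < s) {i j a b : ℕ} (ha : a < s) (hb : b < s)
    (h : i * s + a = j * s + b) : i = j ∧ a = b := by
  have h1 : ∀ (i a : ℕ), a < s → (i * s + a) / s = i := by
    intro i a ha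
    rw [mul_comm, Nat.mul_add_div hs, Nat.div_eq_of_lt ha, add_zero]
  have hij : i = j := by rw [← h1 i a ha, ← h1 j b hb, h]
  subst hij
  exact ⟨rfl, by omega⟩


/-- **Lemma 34 (Kkn).** For `s ≥ 1` and `d ≥ 0`, if `t = (ds+1)·s^s`, then the
complete bipartite graph `K_{s,t}` is not `s`-choosable with defect `d`:
there is an assignment of lists of size `s` to the vertices such that every
colouring from the lists has a vertex with more than `d` same-coloured
neighbours. -/
theorem stmt14 (s d : ℕ) (hs : 1 ≤ s) :
    ∃ L : (Fin s ⊕ Fin ((d * s + 1) * s ^ s)) → Finset ℕ,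
      (∀ v, (L v).card = s) ∧
      ∀ f : (Fin s ⊕ Fin ((d * s + 1) * s ^ s)) → ℕ,
        (∀ v, f v ∈ L v) →
        ∃ v, d < {u |
          (completeBipartiteGraph (Fin s) (Fin ((d * s + 1) * s ^ s))).Adj v u ∧
          f u = f v}.ncard := by
  classical
  have hs0 : 0 < s := hs
  have e : (Fin (d * s + 1) × (Fin s → Fin s)) ≃ Fin ((d * s + 1) * s ^ s) :=
    Fintype.equivFinOfCardEq (by simp)
  set L : (Fin s ⊕ Fin ((d * s + 1) * s ^ s)) → Finset ℕ := fun v =>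
    match v with
    | .inl i => Finset.image (fun j : Fin s => i.1 * s + j.1) Finset.univ
    | .inr r => Finset.image (fun i : Fin s => i.1 * s + ((e.symm r).2 i).1) Finset.univ
    with hL
  refine ⟨L, ?_, ?_⟩
  · rintro (i | r)
    · rw [hL]
      simp only
      rw [Finset.card_image_of_injective _ (fun a b hab => by
        have := decode_eq hs0 a.2 b.2 hab; exact Fin.ext this.2)]
      simp
    · rw [hL]
      simp only
      rw [Finset.card_image_of_injective _ (fun a b hab => by
        have := decode_eq hs0 ((e.symm r).2 a).2 ((e.symm r).2 b).2 hab
        exact Fin.ext this.1)]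
      simp
  · intro f hf
    -- decode the colours of left vertices
    have hleft : ∀ i : Fin s, ∃ j : Fin s, f (.inl i) = i.1 * s + j.1 := by
      intro i
      have := hf (.inl i)
      rw [hL] at this
      simp only [Finset.mem_image, Finset.mem_univ, true_and] at this
      obtain ⟨j, hj⟩ := this
      exact ⟨j, hj.symm⟩
    choose g hg using hleft
    -- for each k, the right vertex e (k, g) picks the colour of some left vertex
    have hright : ∀ k : Fin (d * s + 1), ∃ i : Fin s,
        f (.inr (e (k, g))) = f (.inl i) := by
      intro k
      have := hf (.inr (e (k, g)))
      rw [hL] at this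
      simp only [Finset.mem_image, Finset.mem_univ, true_and, Equiv.symm_apply_apply] at this
      obtain ⟨i, hi⟩ := this
      exact ⟨i, by rw [← hi, hg]⟩
    choose I hI using hright
    -- pigeonhole
    have hcard : Fintype.card (Fin s) * d < Fintype.card (Fin (d * s + 1)) := by
      simp; nlinarith
    obtain ⟨y, hy⟩ := Fintype.exists_lt_card_fiber_of_mul_lt_card I hcard
    refine ⟨.inl y, ?_⟩
    set S := {u | (completeBipartiteGraph (Fin s) (Fin ((d * s + 1) * s ^ s))).Adj (.inl y) u ∧
        f u = f (.inl y)}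
    have hmap : ∀ k ∈ Finset.univ.filter (fun k => I k = y),
        (Sum.inr (e (k, g)) : Fin s ⊕ Fin ((d * s + 1) * s ^ s)) ∈ S := by
      intro k hk
      rw [Finset.mem_filter] at hk
      refine ⟨by simp [completeBipartiteGraph], ?_⟩
      rw [hI k, hk.2]
    have hinj : Set.InjOn (fun k : Fin (d * s + 1) =>
        (Sum.inr (e (k, g)) : Fin s ⊕ Fin ((d * s + 1) * s ^ s)))
        ↑(Finset.univ.filter (fun k => I k = y)) := by
      intro a _ b _ hab
      simp only [Sum.inr.injEq] at hab
      have := e.injective hab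
      exact (Prod.mk.injEq _ _ _ _ ▸ this).1
    have hsub : ↑((Finset.univ.filter (fun k => I k = y)).image
        (fun k => (Sum.inr (e (k, g)) : Fin s ⊕ Fin ((d * s + 1) * s ^ s)))) ⊆ S := by
      intro u hu
      simp only [Finset.coe_image, Set.mem_image, Finset.mem_coe] at hu
      obtain ⟨k, hk, rfl⟩ := hu
      exact hmap k hk
    calc d < (Finset.univ.filter (fun k => I k = y)).card := hy
      _ = ((Finset.univ.filter (fun k => I k = y)).image
            (fun k => (Sum.inr (e (k, g)) : Fin s ⊕ Fin ((d * s + 1) * s ^ s)))).card :=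
          (Finset.card_image_of_injOn hinj).symm
      _ = (↑((Finset.univ.filter (fun k => I k = y)).image
            (fun k => (Sum.inr (e (k, g)) : Fin s ⊕ Fin ((d * s + 1) * s ^ s)))) : Set _).ncard :=
          (Set.ncard_coe_finset _).symm
      _ ≤ S.ncard := Set.ncard_le_ncard hsub (Set.toFinite S)
end
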